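/- arXiv:2310.08313 — 4 statements merged into one kernel-verified Lean document; each statement's English description precedes it below -/
import Mathlib

section
/- For an affine subspace H of dimension d in a Z/2Z-vector space, the quotient K_p(H)/K_{p+1}(H) is isomorphic to the p-th exterior power ⋀^p T(H) of the linear subspace T(H) parallel to H, via the map sending the class of w_G (for G ∈ Aff_p(H)) to v_1 ∧ ... ∧ v_p where v_1, ..., v_p is a basis of the direction T(G). -/
/-- `G` is an affine subspace of dimension `p` of the `ZMod 2`-vector space `V`. -/
def IsAffineOfDim {V : Type*} [AddCommGroup V] [Module (ZMod 2) V] (p : ℕ) (G : Set V) : Prop :=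
  ∃ (a : V) (W : Submodule (ZMod 2) V),
    Module.finrank (ZMod 2) W = p ∧ G = (a + ·) '' (W : Set V)

/-- The indicator vector `w_G = ∑_{ε ∈ G} w_ε` in the free `ZMod 2`-vector space on `V`
(realized, for finite `V`, as the function space `V → ZMod 2` with basis the delta
functions `w_ε`). -/
noncomputable def wvec {V : Type*} (G : Set V) : V → ZMod 2 :=
  Set.indicator G (fun _ => (1 : ZMod 2))

/-- `K_p(H)`: the span of the vectors `w_G` over all `p`-dimensional affine subspaces
`G ⊆ H`. -/
noncomputable def Kp {V : Type*} [AddCommGroup V] [Module (ZMod 2) V]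
    (p : ℕ) (H : Set V) : Submodule (ZMod 2) (V → ZMod 2) :=
  Submodule.span (ZMod 2) {w | ∃ G : Set V, IsAffineOfDim p G ∧ G ⊆ H ∧ w = wvec G}

/-!
Write `H = a + W` and let `τ_z` be translation by `z`. For a `(p - 1)`-flat `b + O` of `H`
and `x, y ∈ W`, `(1 + τ_x)(1 + τ_y) w_{b+O}` is `0` or a `(p + 1)`-flat of `H`, and in
characteristic `2` it equals `(1 + τ_{x+y}) w + (1 + τ_x) w + (1 + τ_y) w`. Since
`(1 + τ_z) w_{b+O}` is the `p`-flat `b + (O ⊔ ⟨z⟩)` (or `0`), the map `v ↦ [w_{a + ⟨v⟩}]`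
(zero on dependent families) is alternating multilinear modulo `K_{p+1}`, so it factors
through `⋀^p W`. It is onto because two parallel `p`-flats of `H` differ by an element of
`K_{p+1}`. For a left inverse, fix a basis `e` of `W` and pair with the flats
`a + ⟨e_i : i ∉ s⟩`: such a flat meets every `(p + 1)`-flat of `H`, and every coordinate
`p`-flat `a + ⟨e_i : i ∈ t⟩` with `t ≠ s`, in a set stable under a nonzero translation, hence
of even size, while it meets `a + ⟨e_i : i ∈ s⟩` only in `a`.
-/

open Module Submodule

section Flat

variable {R V : Type*} [Ring R] [AddCommGroup V] [Module R V]

abbrev flat (b : V) (U : Submodule R V) : Set V := (b + ·) '' (U : Set V)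

lemma mem_flat {b x : V} {U : Submodule R V} : x ∈ flat b U ↔ x - b ∈ U := by
  constructor
  · rintro ⟨u, hu, rfl⟩
    rwa [add_sub_cancel_left]
  · exact fun h => ⟨x - b, h, add_sub_cancel b x⟩

lemma self_mem_flat (b : V) (U : Submodule R V) : b ∈ flat b U :=
  mem_flat.2 (by rw [sub_self]; exact U.zero_mem)

lemma flat_eq_of_sub_mem {b c : V} {U : Submodule R V} (h : c - b ∈ U) :
    flat b U = flat c U := by
  ext x
  rw [mem_flat, mem_flat, ← U.sub_mem_iff_left h, sub_sub_sub_cancel_right]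

lemma flat_subset_flat_iff {a b : V} {U W : Submodule R V} :
    flat b U ⊆ flat a W ↔ b ∈ flat a W ∧ U ≤ W := by
  constructor
  · intro h
    refine ⟨h (self_mem_flat b U), fun u hu => ?_⟩
    have hbu := mem_flat.1 (h (mem_flat.2 (show b + u - b ∈ U by rwa [add_sub_cancel_left])))
    simpa using W.sub_mem hbu (mem_flat.1 (h (self_mem_flat b U)))
  · rintro ⟨hb, hUW⟩ x hx
    exact mem_flat.2 (by simpa using W.add_mem (mem_flat.1 hb) (hUW (mem_flat.1 hx)))

lemma wvec_flat_apply (b x : V) (U : Submodule R V) [Decidable (x - b ∈ U)] :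
    wvec (flat b U) x = if x - b ∈ U then 1 else 0 := by
  classical
  rw [wvec, Set.indicator_apply]
  exact if_congr mem_flat rfl rfl

end Flat

lemma span_range_update {R M ι : Type*} [Semiring R] [AddCommMonoid M] [Module R M]
    [DecidableEq ι] (v : ι → M) (i : ι) (z : M) :
    span R (Set.range (Function.update v i z)) =
      span R (Set.range fun j : {j // j ≠ i} => v j) ⊔ span R {z} := by
  rw [sup_comm, ← span_insert]
  congr 1
  ext w
  simp only [Set.mem_range, Set.mem_insert_iff]
  constructor
  · rintro ⟨j, rfl⟩
    by_cases hj : j = i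
    · subst hj
      exact Or.inl (Function.update_self ..)
    · exact Or.inr ⟨⟨j, hj⟩, (Function.update_of_ne hj ..).symm⟩
  · rintro (rfl | ⟨⟨j, hj⟩, rfl⟩)
    · exact ⟨i, Function.update_self ..⟩
    · exact ⟨j, Function.update_of_ne hj ..⟩

lemma exists_ne_zero_mem_of_finrank_lt_add {K V : Type*} [Field K] [AddCommGroup V]
    [Module K V] [FiniteDimensional K V] {U U' W : Submodule K V} (hU : U ≤ W) (hU' : U' ≤ W)
    (h : finrank K W < finrank K U + finrank K U') : ∃ u ∈ U, u ∈ U' ∧ u ≠ 0 := by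
  by_contra! hd
  have hsum := Submodule.finrank_sup_add_finrank_inf_eq U U'
  rw [(disjoint_def.2 hd).eq_bot, finrank_bot, add_zero] at hsum
  have := Submodule.finrank_mono (sup_le hU hU')
  omega

section FlatPair

variable {V : Type*} [AddCommGroup V] [Module (ZMod 2) V]

lemma mem_sup_span_singleton_iff {U : Submodule (ZMod 2) V} {x y : V} :
    y ∈ U ⊔ span (ZMod 2) {x} ↔ y ∈ U ∨ y - x ∈ U := by
  simp only [mem_sup, mem_span_singleton]
  constructor
  · rintro ⟨u, hu, _, ⟨c, rfl⟩, rfl⟩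
    obtain rfl | rfl : c = 0 ∨ c = 1 := by revert c; decide
    · simpa using Or.inl hu
    · simpa using Or.inr hu
  · rintro (h | h)
    · exact ⟨y, h, 0, ⟨0, zero_smul _ _⟩, add_zero y⟩
    · exact ⟨y - x, h, x, ⟨1, one_smul _ _⟩, sub_add_cancel y x⟩

/-- `(1 + τ_z) w_{b + O}`, where `τ_z` is translation by `z`. -/
noncomputable def wvecFlatPair (b z : V) (O : Submodule (ZMod 2) V) : V → ZMod 2 :=
  wvec (flat b O) + wvec (flat (b + z) O)

lemma wvecFlatPair_of_mem {b z : V} {O : Submodule (ZMod 2) V} (hz : z ∈ O) :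
    wvecFlatPair b z O = 0 := by
  rw [wvecFlatPair, flat_eq_of_sub_mem (show b + z - b ∈ O by simpa), ZModModule.add_self]

lemma wvecFlatPair_of_notMem {b z : V} {O : Submodule (ZMod 2) V} (hz : z ∉ O) :
    wvecFlatPair b z O = wvec (flat b (O ⊔ span (ZMod 2) {z})) := by
  classical
  ext x
  have hdisj : ¬ (x - b ∈ O ∧ x - (b + z) ∈ O) := fun ⟨h1, h2⟩ => hz (by
    simpa using O.sub_mem h1 h2)
  simp only [wvecFlatPair, Pi.add_apply, wvec_flat_apply, mem_sup_span_singleton_iff, sub_sub]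
  by_cases h1 : x - b ∈ O <;> by_cases h2 : x - (b + z) ∈ O <;> simp_all

lemma wvec_flat_mem_Kp {p : ℕ} {b : V} {U : Submodule (ZMod 2) V} {H : Set V}
    (hU : finrank (ZMod 2) U = p) (hH : flat b U ⊆ H) : wvec (flat b U) ∈ Kp p H :=
  subset_span ⟨_, ⟨b, U, hU, rfl⟩, hH, rfl⟩

variable [FiniteDimensional (ZMod 2) V] {p : ℕ} {a b : V} {W : Submodule (ZMod 2) V}

/-- Two parallel `p`-flats either coincide or tile a `(p + 1)`-flat. -/
lemma wvec_flat_add_wvec_flat_mem_Kp_succ {c : V} {U : Submodule (ZMod 2) V}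
    (hU : finrank (ZMod 2) U = p) (hb : flat b U ⊆ flat a W) (hc : flat c U ⊆ flat a W) :
    wvec (flat b U) + wvec (flat c U) ∈ Kp (p + 1) (flat a W) := by
  rw [show c = b + (c - b) by abel, ← wvecFlatPair]
  by_cases hbc : c - b ∈ U
  · rw [wvecFlatPair_of_mem hbc]
    exact zero_mem _
  obtain ⟨hbH, hUW⟩ := flat_subset_flat_iff.1 hb
  have hcb : c - b ∈ W := by
    simpa using W.sub_mem (mem_flat.1 (flat_subset_flat_iff.1 hc).1) (mem_flat.1 hbH)
  rw [wvecFlatPair_of_notMem hbc]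
  exact wvec_flat_mem_Kp (by rw [finrank_sup_span_singleton hbc, hU])
    (flat_subset_flat_iff.2 ⟨hbH, sup_le hUW ((span_singleton_le_iff_mem _ _).2 hcb)⟩)

variable {z : V} {O : Submodule (ZMod 2) V}

lemma wvecFlatPair_mem_Kp (hO : O ≤ W) (hOp : finrank (ZMod 2) O + 1 = p)
    (hb : b ∈ flat a W) (hz : z ∈ W) : wvecFlatPair b z O ∈ Kp p (flat a W) := by
  by_cases hzO : z ∈ O
  · rw [wvecFlatPair_of_mem hzO]
    exact zero_mem _
  rw [wvecFlatPair_of_notMem hzO]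
  exact wvec_flat_mem_Kp (by rw [finrank_sup_span_singleton hzO, hOp])
    (flat_subset_flat_iff.2 ⟨hb, sup_le hO ((span_singleton_le_iff_mem _ _).2 hz)⟩)

lemma wvecFlatPair_add_mem_Kp_succ {c : V} (hO : O ≤ W) (hOp : finrank (ZMod 2) O + 1 = p)
    (hb : b ∈ flat a W) (hc : c ∈ flat a W) (hz : z ∈ W) :
    wvecFlatPair b z O + wvecFlatPair c z O ∈ Kp (p + 1) (flat a W) := by
  by_cases hzO : z ∈ O
  · rw [wvecFlatPair_of_mem hzO, wvecFlatPair_of_mem hzO, add_zero]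
    exact zero_mem _
  have hle : O ⊔ span (ZMod 2) {z} ≤ W := sup_le hO ((span_singleton_le_iff_mem _ _).2 hz)
  rw [wvecFlatPair_of_notMem hzO, wvecFlatPair_of_notMem hzO]
  exact wvec_flat_add_wvec_flat_mem_Kp_succ (by rw [finrank_sup_span_singleton hzO, hOp])
    (flat_subset_flat_iff.2 ⟨hb, hle⟩) (flat_subset_flat_iff.2 ⟨hc, hle⟩)

end FlatPair

section FlatClass

variable {V : Type*} [AddCommGroup V] [Module (ZMod 2) V] (p : ℕ) (a : V)
  (W : Submodule (ZMod 2) V)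

abbrev KpQuot : Type _ :=
  ↥(Kp p (flat a W)) ⧸ (Kp (p + 1) (flat a W)).comap (Kp p (flat a W)).subtype

open Classical in
noncomputable def flatClass (P : Submodule (ZMod 2) V) : KpQuot p a W :=
  if h : finrank (ZMod 2) P = p ∧ P ≤ W then
    Submodule.Quotient.mk
      ⟨wvec (flat a P),
        wvec_flat_mem_Kp h.1 (flat_subset_flat_iff.2 ⟨self_mem_flat a W, h.2⟩)⟩
  else 0

variable {p a W}

lemma KpQuot.mk_eq_mk_iff {f g : Kp p (flat a W)} :
    (Submodule.Quotient.mk f : KpQuot p a W) = Submodule.Quotient.mk g ↔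
      (f : V → ZMod 2) + g ∈ Kp (p + 1) (flat a W) := by
  rw [Submodule.Quotient.eq, mem_comap, map_sub, ZModModule.sub_eq_add]
  rfl

lemma flatClass_of_finrank_ne {P : Submodule (ZMod 2) V} (h : finrank (ZMod 2) P ≠ p) :
    flatClass p a W P = 0 :=
  dif_neg fun h' => h h'.1

lemma flatClass_span_range_of_not_linearIndependent {v : Fin p → V}
    (hv : ¬ LinearIndependent (ZMod 2) v) : flatClass p a W (span (ZMod 2) (Set.range v)) = 0 :=
  flatClass_of_finrank_ne fun h =>
    hv (linearIndependent_iff_card_eq_finrank_span.2 (by rw [Fintype.card_fin]; exact h.symm))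

variable [FiniteDimensional (ZMod 2) V]

lemma flatClass_eq_mk {b : V} {U : Submodule (ZMod 2) V} (hU : finrank (ZMod 2) U = p)
    (hb : flat b U ⊆ flat a W) (hmem : wvec (flat b U) ∈ Kp p (flat a W)) :
    flatClass p a W U = Submodule.Quotient.mk ⟨wvec (flat b U), hmem⟩ := by
  have hUW := (flat_subset_flat_iff.1 hb).2
  rw [flatClass, dif_pos ⟨hU, hUW⟩, KpQuot.mk_eq_mk_iff]
  exact wvec_flat_add_wvec_flat_mem_Kp_succ hU
    (flat_subset_flat_iff.2 ⟨self_mem_flat a W, hUW⟩) hb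

lemma flatClass_sup_span_singleton {O : Submodule (ZMod 2) V} {z : V} (hO : O ≤ W)
    (hOp : finrank (ZMod 2) O + 1 = p) (hz : z ∈ W) :
    flatClass p a W (O ⊔ span (ZMod 2) {z}) =
      Submodule.Quotient.mk ⟨wvecFlatPair a z O,
        wvecFlatPair_mem_Kp hO hOp (self_mem_flat a W) hz⟩ := by
  by_cases hzO : z ∈ O
  · rw [sup_eq_left.2 ((span_singleton_le_iff_mem _ _).2 hzO),
      flatClass_of_finrank_ne (by omega), eq_comm, Submodule.Quotient.mk_eq_zero]
    simp [wvecFlatPair_of_mem hzO]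
  · have hle : O ⊔ span (ZMod 2) {z} ≤ W := sup_le hO ((span_singleton_le_iff_mem _ _).2 hz)
    simp_rw [wvecFlatPair_of_notMem hzO]
    exact flatClass_eq_mk (by rw [finrank_sup_span_singleton hzO, hOp])
      (flat_subset_flat_iff.2 ⟨self_mem_flat a W, hle⟩) _

lemma flatClass_sup_span_singleton_add {O : Submodule (ZMod 2) V} {x y : V} (hO : O ≤ W)
    (hOp : finrank (ZMod 2) O < p) (hx : x ∈ W) (hy : y ∈ W) :
    flatClass p a W (O ⊔ span (ZMod 2) {x + y}) =
      flatClass p a W (O ⊔ span (ZMod 2) {x}) + flatClass p a W (O ⊔ span (ZMod 2) {y}) := by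
  by_cases hOp' : finrank (ZMod 2) O + 1 = p
  · rw [flatClass_sup_span_singleton hO hOp' (W.add_mem hx hy),
      flatClass_sup_span_singleton hO hOp' hx, flatClass_sup_span_singleton hO hOp' hy,
      ← Submodule.Quotient.mk_add, KpQuot.mk_eq_mk_iff]
    have key : wvecFlatPair a (x + y) O + (wvecFlatPair a x O + wvecFlatPair a y O) =
        wvecFlatPair a x O + wvecFlatPair (a + y) x O := by
      simp only [wvecFlatPair, ← add_assoc, add_right_comm a y x]
      linear_combination ZModModule.add_self (wvec (flat a O))
    rw [Submodule.coe_add, key]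
    exact wvecFlatPair_add_mem_Kp_succ hO hOp' (self_mem_flat a W)
      (mem_flat.2 (by simpa using hy)) hx
  · have hne : ∀ z, finrank (ZMod 2) ↥(O ⊔ span (ZMod 2) {z}) ≠ p := fun z => by
      by_cases hzO : z ∈ O
      · rw [sup_eq_left.2 ((span_singleton_le_iff_mem _ _).2 hzO)]
        omega
      · rw [finrank_sup_span_singleton hzO]
        omega
    rw [flatClass_of_finrank_ne (hne _), flatClass_of_finrank_ne (hne _),
      flatClass_of_finrank_ne (hne _), add_zero]

end FlatClass

section FlatClassLinear

variable {V : Type*} [AddCommGroup V] [Module (ZMod 2) V] [FiniteDimensional (ZMod 2) V]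
  (p : ℕ) (a : V) (W : Submodule (ZMod 2) V)

noncomputable def flatClassAlternating : W [⋀^Fin p]→ₗ[ZMod 2] KpQuot p a W where
  toFun v := flatClass p a W (span (ZMod 2) (Set.range (W.subtype ∘ v)))
  map_update_add' v i x y := by
    have hO : span (ZMod 2) (Set.range fun j : {j // j ≠ i} => (W.subtype ∘ v) j) ≤ W := by
      rw [span_le]
      rintro _ ⟨j, rfl⟩
      exact (v j).2
    have hOp : finrank (ZMod 2) (span (ZMod 2)
        (Set.range fun j : {j // j ≠ i} => (W.subtype ∘ v) j)) < p :=
      (finrank_range_le_card _).trans_lt (by simp [Fintype.card_subtype_compl, i.pos])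
    simp only [Function.comp_update, span_range_update, map_add]
    exact flatClass_sup_span_singleton_add hO hOp x.2 y.2
  map_update_smul' v i c x := by
    obtain rfl | rfl : c = 0 ∨ c = 1 := by revert c; decide
    · rw [zero_smul, zero_smul]
      exact flatClass_span_range_of_not_linearIndependent fun h => h.ne_zero i (by simp)
    · rw [one_smul, one_smul]
  map_eq_zero_of_eq' v i j hij hne :=
    flatClass_span_range_of_not_linearIndependent fun h =>
      hne (h.injective (congrArg W.subtype hij))

noncomputable def flatClassLinear : ⋀[ZMod 2]^p W →ₗ[ZMod 2] KpQuot p a W :=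
  exteriorPower.alternatingMapLinearEquiv (flatClassAlternating p a W)

variable {p a W}

lemma flatClassLinear_ιMulti (v : Fin p → W) :
    flatClassLinear p a W (exteriorPower.ιMulti (ZMod 2) p v) =
      flatClass p a W (span (ZMod 2) (Set.range (W.subtype ∘ v))) :=
  exteriorPower.alternatingMapLinearEquiv_apply_ιMulti _ _

lemma flatClassLinear_ιMulti_basis {b : V} {U : Submodule (ZMod 2) V} (hUW : U ≤ W)
    (hb : flat b U ⊆ flat a W) (v : Basis (Fin p) (ZMod 2) U)
    (hmem : wvec (flat b U) ∈ Kp p (flat a W)) :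
    flatClassLinear p a W (exteriorPower.ιMulti (ZMod 2) p fun i => inclusion hUW (v i)) =
      Submodule.Quotient.mk ⟨wvec (flat b U), hmem⟩ := by
  have hspan : span (ZMod 2) (Set.range (W.subtype ∘ fun i => inclusion hUW (v i))) = U := by
    rw [show W.subtype ∘ (fun i => inclusion hUW (v i)) = U.subtype ∘ v from rfl,
      Set.range_comp, span_image, v.span_eq, map_subtype_top]
  rw [flatClassLinear_ιMulti, hspan]
  exact flatClass_eq_mk (by rw [finrank_eq_card_basis v, Fintype.card_fin]) hb hmem

lemma flatClassLinear_surjective : Function.Surjective (flatClassLinear p a W) := by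
  have hgen : span (ZMod 2) (((↑) : Kp p (flat a W) → V → ZMod 2) ⁻¹'
        {w | ∃ G : Set V, IsAffineOfDim p G ∧ G ⊆ flat a W ∧ w = wvec G}) ≤
      (LinearMap.range (flatClassLinear p a W)).comap (mkQ _) := by
    rw [span_le]
    rintro y ⟨_, ⟨b, U, hU, rfl⟩, hb, hy⟩
    have hUW := (flat_subset_flat_iff.1 hb).2
    exact ⟨_, (flatClassLinear_ιMulti_basis hUW hb (finBasisOfFinrankEq _ _ hU)
      (hy ▸ y.2)).trans (congrArg _ (Subtype.ext hy.symm))⟩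
  intro q
  obtain ⟨y, rfl⟩ := Submodule.Quotient.mk_surjective _ q
  exact hgen (span_span_coe_preimage.ge mem_top)

end FlatClassLinear

section Pairing

variable {V : Type*} [AddCommGroup V] [Module (ZMod 2) V]

lemma wvec_flat_periodic {b u : V} {U : Submodule (ZMod 2) V} (hu : u ∈ U) :
    Function.Periodic (wvec (flat b U)) u := fun x => by
  classical
  simp only [wvec_flat_apply, add_sub_right_comm, U.add_mem_iff_left hu]

variable [Fintype V]

lemma sum_eq_zero_of_periodic {M : Type*} [AddCommGroup M] [Module (ZMod 2) M] {f : V → M}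
    {u : V} (hu : u ≠ 0) (hf : Function.Periodic f u) : ∑ x, f x = 0 :=
  Finset.sum_involution (fun x _ => x + u) (fun x _ => by rw [hf, ZModModule.add_self])
    (fun x _ _ h => hu (by simpa using h)) (fun _ _ => Finset.mem_univ _)
    (fun x _ => by rw [add_assoc, ZModModule.add_self, add_zero])

lemma dotProduct_wvec_flat_eq_zero {b c u : V} {U U' : Submodule (ZMod 2) V} (hu0 : u ≠ 0)
    (hu : u ∈ U) (hu' : u ∈ U') : wvec (flat b U) ⬝ᵥ wvec (flat c U') = 0 :=
  sum_eq_zero_of_periodic hu0 ((wvec_flat_periodic hu).mul (wvec_flat_periodic hu'))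

lemma dotProduct_wvec_flat_of_disjoint {b : V} {U U' : Submodule (ZMod 2) V}
    (h : Disjoint U U') : wvec (flat b U) ⬝ᵥ wvec (flat b U') = 1 := by
  classical
  rw [dotProduct, Finset.sum_eq_single b]
  · simp [wvec]
  · intro x _ hx
    have : ¬ (x - b ∈ U ∧ x - b ∈ U') := fun ⟨h1, h2⟩ =>
      hx (sub_eq_zero.1 (disjoint_def.1 h _ h1 h2))
    simp only [wvec_flat_apply]
    split_ifs <;> simp_all
  · simp

end Pairing

section CoordSpan

variable {V : Type*} [AddCommGroup V] [Module (ZMod 2) V] {W : Submodule (ZMod 2) V}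
  {ι : Type*} (e : Basis ι (ZMod 2) W)

def coordSpan (s : Set ι) : Submodule (ZMod 2) V :=
  span (ZMod 2) ((fun i => (e i : V)) '' s)

lemma linearIndependent_subtype_comp_basis : LinearIndependent (ZMod 2) (W.subtype ∘ e) :=
  e.linearIndependent.map' _ W.ker_subtype

lemma coordSpan_le (s : Set ι) : coordSpan e s ≤ W := by
  rw [coordSpan, span_le]
  rintro _ ⟨i, -, rfl⟩
  exact (e i).2

lemma basis_mem_coordSpan {s : Set ι} {i : ι} (hi : i ∈ s) : (e i : V) ∈ coordSpan e s :=
  subset_span ⟨i, hi, rfl⟩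

lemma disjoint_coordSpan {s t : Set ι} (h : Disjoint s t) :
    Disjoint (coordSpan e s) (coordSpan e t) :=
  (linearIndependent_subtype_comp_basis e).disjoint_span_image h

lemma finrank_coordSpan (s : Finset ι) : finrank (ZMod 2) (coordSpan e s) = s.card := by
  rw [coordSpan, Set.image_eq_range]
  exact (finrank_span_eq_card
    ((linearIndependent_subtype_comp_basis e).comp _ Subtype.val_injective)).trans (by simp)

end CoordSpan

section DualFlatMap

variable {V : Type*} [AddCommGroup V] [Module (ZMod 2) V] [Fintype V] (p : ℕ) (a : V)
  {W : Submodule (ZMod 2) V} {ι : Type*} [LinearOrder ι] [Fintype ι] (e : Basis ι (ZMod 2) W)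

noncomputable def dualFlatMap : (V → ZMod 2) →ₗ[ZMod 2] ⋀[ZMod 2]^p W :=
  (e.exteriorPower p).equivFun.symm.toLinearMap ∘ₗ
    LinearMap.pi fun s : Set.powersetCard ι p =>
      dotProductBilin (ZMod 2) (ZMod 2) (wvec (flat a (coordSpan e ↑(s : Finset ι)ᶜ)))

lemma dualFlatMap_apply (f : V → ZMod 2) :
    dualFlatMap p a e f = (e.exteriorPower p).equivFun.symm
      fun s => wvec (flat a (coordSpan e ↑(s : Finset ι)ᶜ)) ⬝ᵥ f :=
  rfl

lemma Kp_succ_le_ker_dualFlatMap :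
    Kp (p + 1) (flat a W) ≤ LinearMap.ker (dualFlatMap p a e) := by
  rw [Kp, span_le]
  rintro _ ⟨_, ⟨b, U, hU, rfl⟩, hb, rfl⟩
  rw [SetLike.mem_coe, LinearMap.mem_ker, dualFlatMap_apply, LinearEquiv.symm_apply_eq, map_zero]
  funext s
  obtain ⟨u, huU, huF, hu0⟩ := exists_ne_zero_mem_of_finrank_lt_add
    (flat_subset_flat_iff.1 hb).2 (coordSpan_le e _) (by
      rw [hU, finrank_coordSpan, Finset.card_compl, Set.powersetCard.card_eq s,
        finrank_eq_card_basis e]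
      omega)
  exact dotProduct_wvec_flat_eq_zero hu0 huF huU

lemma dualFlatMap_wvec_coordSpan (s : Set.powersetCard ι p) :
    dualFlatMap p a e (wvec (flat a (coordSpan e ↑(s : Finset ι)))) = e.exteriorPower p s := by
  rw [dualFlatMap_apply, LinearEquiv.symm_apply_eq]
  funext t
  rw [Basis.equivFun_self]
  split_ifs with hst
  · subst hst
    exact dotProduct_wvec_flat_of_disjoint
      (disjoint_coordSpan e (by rw [Finset.coe_compl]; exact disjoint_compl_left))
  · obtain ⟨i, his, hit⟩ := (Set.powersetCard.exists_mem_notMem_iff_ne s t).1 hst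
    exact dotProduct_wvec_flat_eq_zero (by simpa using e.ne_zero i)
      (basis_mem_coordSpan e (by simpa using hit)) (basis_mem_coordSpan e his)

end DualFlatMap

section Injective

variable {V : Type*} [AddCommGroup V] [Module (ZMod 2) V] [Fintype V] {p : ℕ} {a : V}
  {W : Submodule (ZMod 2) V}

lemma flatClassLinear_basis_exteriorPower {ι : Type*} [LinearOrder ι] (e : Basis ι (ZMod 2) W)
    (s : Set.powersetCard ι p) :
    flatClassLinear p a W (e.exteriorPower p s) =
      flatClass p a W (coordSpan e ↑(s : Finset ι)) := by
  rw [exteriorPower.basis_apply, exteriorPower.ιMulti_family, flatClassLinear_ιMulti,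
    ← Function.comp_assoc, Set.range_comp, coordSpan]
  congr 3
  ext i
  exact Set.powersetCard.mem_range_ofFinEmbEquiv_symm_iff_mem s i

lemma flatClassLinear_injective : Function.Injective (flatClassLinear p a W) := by
  let e := Module.finBasis (ZMod 2) W
  let Φ : KpQuot p a W →ₗ[ZMod 2] ⋀[ZMod 2]^p W :=
    (Kp (p + 1) (flat a W)).comap (Kp p (flat a W)).subtype |>.liftQ
      (dualFlatMap p a e ∘ₗ (Kp p (flat a W)).subtype)
      fun _ hx => Kp_succ_le_ker_dualFlatMap p a e hx
  have hΦ : Φ ∘ₗ flatClassLinear p a W = LinearMap.id := (e.exteriorPower p).ext fun s => by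
    have hU := (finrank_coordSpan e s.val).trans s.prop
    have hsub := flat_subset_flat_iff.2 ⟨self_mem_flat a W, coordSpan_le e ↑s.val⟩
    rw [LinearMap.comp_apply, flatClassLinear_basis_exteriorPower,
      flatClass_eq_mk hU hsub (wvec_flat_mem_Kp hU hsub)]
    exact dualFlatMap_wvec_coordSpan p a e s
  exact Function.LeftInverse.injective (LinearMap.congr_fun hΦ)

end Injective

theorem Kp_quotient_iso_exteriorPower_general {V : Type*} [Fintype V] [AddCommGroup V]
    [Module (ZMod 2) V] (p : ℕ) (a : V) (W : Submodule (ZMod 2) V)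
    (H : Set V) (hH : H = (a + ·) '' (W : Set V)) :
    ∃ e : (↥(Kp p H) ⧸ (Kp (p + 1) H).comap (Kp p H).subtype) ≃ₗ[ZMod 2]
        ↥(⋀[ZMod 2]^p ↥W),
      ∀ (b : V) (U : Submodule (ZMod 2) V), Module.finrank (ZMod 2) U = p →
        ∀ (hUW : U ≤ W), (b + ·) '' (U : Set V) ⊆ H →
        ∀ (v : Module.Basis (Fin p) (ZMod 2) U)
          (hmem : wvec ((b + ·) '' (U : Set V)) ∈ Kp p H)
          (hin : ExteriorAlgebra.ιMulti (ZMod 2) p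
              (fun i => Submodule.inclusion hUW (v i)) ∈ ⋀[ZMod 2]^p ↥W),
          e (Submodule.Quotient.mk ⟨wvec ((b + ·) '' (U : Set V)), hmem⟩) =
            ⟨ExteriorAlgebra.ιMulti (ZMod 2) p (fun i => Submodule.inclusion hUW (v i)),
              hin⟩ := by
  subst hH
  refine ⟨(LinearEquiv.ofBijective (flatClassLinear p a W)
    ⟨flatClassLinear_injective, flatClassLinear_surjective⟩).symm, ?_⟩
  intro b U _ hUW hb v hmem _
  rw [LinearEquiv.symm_apply_eq]
  exact (flatClassLinear_ιMulti_basis hUW hb v hmem).symm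

/-- For an affine subspace `H = a + W` of dimension `d` in a `Z/2Z`-vector
space `V`, the quotient `K_p(H)/K_{p+1}(H)` is isomorphic to the `p`-th exterior power
`⋀^p T(H)` of the linear subspace `W = T(H)` parallel to `H`, via the map sending the
class of `w_G` (for a `p`-dimensional affine subspace `G = b + U ⊆ H`) to
`v 1 ∧ ⋯ ∧ v p`, where `v` is a basis of the direction `U = T(G)`. -/
theorem Kp_quotient_iso_exteriorPower {V : Type*} [Fintype V] [AddCommGroup V]
    [Module (ZMod 2) V] (d p : ℕ) (a : V) (W : Submodule (ZMod 2) V)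
    (hW : Module.finrank (ZMod 2) W = d) (H : Set V) (hH : H = (a + ·) '' (W : Set V)) :
    ∃ e : (↥(Kp p H) ⧸ (Kp (p + 1) H).comap (Kp p H).subtype) ≃ₗ[ZMod 2]
        ↥(⋀[ZMod 2]^p ↥W),
      ∀ (b : V) (U : Submodule (ZMod 2) V), Module.finrank (ZMod 2) U = p →
        ∀ (hUW : U ≤ W), (b + ·) '' (U : Set V) ⊆ H →
        ∀ (v : Module.Basis (Fin p) (ZMod 2) U)
          (hmem : wvec ((b + ·) '' (U : Set V)) ∈ Kp p H)
          (hin : ExteriorAlgebra.ιMulti (ZMod 2) p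
              (fun i => Submodule.inclusion hUW (v i)) ∈ ⋀[ZMod 2]^p ↥W),
          e (Submodule.Quotient.mk ⟨wvec ((b + ·) '' (U : Set V)), hmem⟩) =
            ⟨ExteriorAlgebra.ιMulti (ZMod 2) p (fun i => Submodule.inclusion hUW (v i)),
              hin⟩ :=
  Kp_quotient_iso_exteriorPower_general p a W H hH
end

section
/- Let X be a polyhedral complex in R^n whose recession cones form a pointed fan Σ. The face poset of the canonical compactification of X in the tropical toric variety TΣ is isomorphic to the subposet of X × Σ consisting of pairs (σ, ρ) with ρ ⊆ RecCone(σ), where (σ', ρ') ≤ (σ, ρ) iff σ' ≤ σ in X and ρ ≤ ρ' in Σ. -/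
section PolyhedralDefs

variable {V : Type*} [AddCommGroup V] [Module ℝ V]

/-- A (nonempty) polyhedron: a nonempty finite intersection of closed halfspaces. -/
def IsPolyhedron (P : Set V) : Prop :=
  P.Nonempty ∧ ∃ s : Finset ((V →ₗ[ℝ] ℝ) × ℝ), P = {x | ∀ c ∈ s, c.1 x ≤ c.2}

/-- A polyhedral cone: a finite intersection of closed linear halfspaces. -/
def IsPolyCone (C : Set V) : Prop :=
  ∃ s : Finset (V →ₗ[ℝ] ℝ), C = {x | ∀ ℓ ∈ s, ℓ x ≤ 0}

/-- `F` is a face of the polyhedron `P`. -/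
def IsFaceOf (F P : Set V) : Prop :=
  F = P ∨ ∃ (ℓ : V →ₗ[ℝ] ℝ) (c : ℝ), (∀ x ∈ P, ℓ x ≤ c) ∧ F = {x | x ∈ P ∧ ℓ x = c}

/-- A polyhedral complex. -/
def IsPolyComplex (𝒳 : Set (Set V)) : Prop :=
  (∀ P ∈ 𝒳, IsPolyhedron P) ∧
  (∀ P ∈ 𝒳, ∀ F : Set V, IsFaceOf F P → F.Nonempty → F ∈ 𝒳) ∧
  (∀ P ∈ 𝒳, ∀ Q ∈ 𝒳, (P ∩ Q).Nonempty → IsFaceOf (P ∩ Q) P ∧ IsFaceOf (P ∩ Q) Q)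

/-- A fan. -/
def IsFan (𝒞 : Set (Set V)) : Prop :=
  IsPolyComplex 𝒞 ∧ ∀ C ∈ 𝒞, IsPolyCone C

/-- A pointed fan. -/
def IsPointedFan (𝒞 : Set (Set V)) : Prop :=
  IsFan 𝒞 ∧ ({0} : Set V) ∈ 𝒞 ∧ ∀ C ∈ 𝒞, ∀ x ∈ C, -x ∈ C → x = 0

/-- The recession cone of a subset `P`. -/
def recCone (P : Set V) : Set V :=
  {v | ∀ p ∈ P, ∀ t : ℝ, 0 ≤ t → p + t • v ∈ P}

end PolyhedralDefs

/-- The points of the tropical toric variety `TΣ`: a point of sedentarity `ρ` is a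
point of the quotient `ℝⁿ / span(ρ)` of the torus orbit labelled by the cone `ρ`. -/
def TPoint (n : ℕ) : Type :=
  Σ ρ : Set (Fin n → ℝ), (Fin n → ℝ) ⧸ Submodule.span ℝ ρ

/-- The face of the canonical compactification of `X` labelled by the pair `(σ, ρ)`
with `ρ ⊆ RecCone(σ)`: the union, over the cones `η ∈ Σ` with `ρ ⊆ η ⊆ RecCone(σ)`,
of the images of `σ` in the corresponding torus orbits `ℝⁿ / span(η)`. -/
def faceSet {n : ℕ} (S : Set (Set (Fin n → ℝ))) (σ ρ : Set (Fin n → ℝ)) :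
    Set (TPoint n) :=
  {p | ∃ η ∈ S, ρ ⊆ η ∧ η ⊆ recCone σ ∧ ∃ x ∈ σ, p = ⟨η, Submodule.Quotient.mk x⟩}

/-- The subposet of `X × Σ` consisting of the pairs `(σ, ρ)` with `ρ ⊆ RecCone(σ)`,
with order `(σ', ρ') ≤ (σ, ρ) ↔ σ' ≤ σ in X and ρ ≤ ρ' in Σ`. -/
def PairPoset {n : ℕ} (X S : Set (Set (Fin n → ℝ))) : Type :=
  {q : Set (Fin n → ℝ) × Set (Fin n → ℝ) // q.1 ∈ X ∧ q.2 ∈ S ∧ q.2 ⊆ recCone q.1}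

instance PairPoset.instPartialOrder {n : ℕ} (X S : Set (Set (Fin n → ℝ))) :
    PartialOrder (PairPoset X S) where
  le a b := a.1.1 ⊆ b.1.1 ∧ b.1.2 ⊆ a.1.2
  le_refl a := ⟨subset_rfl, subset_rfl⟩
  le_trans a b c hab hbc := ⟨hab.1.trans hbc.1, hbc.2.trans hab.2⟩
  le_antisymm a b hab hba :=
    Subtype.ext (Prod.ext (Set.Subset.antisymm hab.1 hba.1)
      (Set.Subset.antisymm hba.2 hab.2))

/-! Shrinking the polyhedron shrinks its recession cone, so `(σ, ρ) ↦ faceSet Σ σ ρ` is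
monotone. Conversely, if `faceSet Σ σ' ρ' ⊆ faceSet Σ σ ρ`, each point of `σ'` in the orbit
of `ρ'` also comes from `σ`: this forces `ρ ⊆ ρ'`, and for every `x' ∈ σ'` gives an `x ∈ σ` with
`x' - x = a - b`, `a, b ∈ ρ'`. Then `x' + b = x + a` lies in `σ ∩ σ'`, halfway between `x'` and
`x' + 2b ∈ σ'`; as `σ ∩ σ'` is a face of `σ'`, it contains `x'`. -/

section Polyhedra

variable {V : Type*} [AddCommGroup V] [Module ℝ V]

def recessionCone (P : Set V) : PointedCone ℝ V where
  carrier := recCone P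
  zero_mem' p hp t _ := by simpa using hp
  add_mem' {v w} hv hw p hp t ht := by
    simpa [smul_add, add_assoc] using hw _ (hv p hp t ht) t ht
  smul_mem' c v hv p hp t ht := by
    change p + t • (c : ℝ) • v ∈ P
    rw [smul_smul]
    exact hv p hp (t * c) (mul_nonneg ht c.2)

lemma PointedCone.exists_sub_eq_of_mem_span (C : PointedCone ℝ V) {v : V}
    (hv : v ∈ Submodule.span ℝ (C : Set V)) : ∃ a ∈ C, ∃ b ∈ C, a - b = v := by
  induction hv using Submodule.span_induction with
  | mem x hx => exact ⟨x, hx, 0, C.zero_mem, sub_zero x⟩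
  | zero => exact ⟨0, C.zero_mem, 0, C.zero_mem, sub_zero 0⟩
  | add x y _ _ ihx ihy =>
    obtain ⟨a, ha, b, hb, rfl⟩ := ihx
    obtain ⟨a', ha', b', hb', rfl⟩ := ihy
    exact ⟨a + a', C.add_mem ha ha', b + b', C.add_mem hb hb', add_sub_add_comm ..⟩
  | smul c x _ ih =>
    obtain ⟨a, ha, b, hb, rfl⟩ := ih
    rcases le_total 0 c with hc | hc
    · exact ⟨c • a, C.smul_mem hc ha, c • b, C.smul_mem hc hb,
        (smul_sub c a b).symm⟩
    · refine ⟨(-c) • b, C.smul_mem (neg_nonneg.2 hc) hb,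
        (-c) • a, C.smul_mem (neg_nonneg.2 hc) ha, ?_⟩
      rw [smul_sub, neg_smul, neg_smul, neg_sub_neg]

/-- A ray `p + ℝ≥0 • v` stays in a halfspace `ℓ ≤ c` only if `ℓ v ≤ 0`. -/
lemma IsPolyhedron.mem_recCone_of_add_smul_mem {P : Set V} (hP : IsPolyhedron P) {p v : V}
    (hp : p ∈ P) (hray : ∀ t : ℝ, 0 ≤ t → p + t • v ∈ P) : v ∈ recCone P := by
  obtain ⟨-, s, rfl⟩ := hP
  have hv : ∀ c ∈ s, c.1 v ≤ 0 := by
    intro c hc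
    by_contra! h
    have hray_c := hray ((c.2 - c.1 p) / c.1 v + 1) (by have := hp c hc; positivity) c hc
    simp only [map_add, map_smul, smul_eq_mul, add_mul, div_mul_cancel₀ _ h.ne', one_mul]
      at hray_c
    linarith
  intro q hq t ht c hc
  simp only [map_add, map_smul, smul_eq_mul]
  nlinarith [hq c hc, hv c hc]

lemma IsPolyhedron.recCone_mono {P Q : Set V} (hQ : IsPolyhedron Q) (hPQ : P ⊆ Q)
    (hP : P.Nonempty) : recCone P ⊆ recCone Q := fun _ hv ↦
  hQ.mem_recCone_of_add_smul_mem (hPQ hP.some_mem) fun t ht ↦ hPQ (hv _ hP.some_mem t ht)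

lemma IsFaceOf.isExtreme {F P : Set V} (h : IsFaceOf F P) : IsExtreme ℝ P F := by
  rcases h with rfl | ⟨ℓ, c, hle, rfl⟩
  · exact IsExtreme.refl ℝ F
  refine ⟨fun x hx ↦ hx.1, fun x hx y hy z hz ⟨a, b, ha, hb, hab, hxyz⟩ ↦ ⟨hx, ?_⟩⟩
  have hℓz : a * ℓ x + b * ℓ y = c := by
    rw [← hz.2, ← hxyz, map_add, map_smul, map_smul, smul_eq_mul, smul_eq_mul]
  have haℓx : a * ℓ x = a * c := by
    nlinarith [mul_le_mul_of_nonneg_left (hle x hx) ha.le,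
      mul_le_mul_of_nonneg_left (hle y hy) hb.le, congrArg (· * c) hab]
  exact mul_left_cancel₀ ha.ne' haℓx

lemma IsPolyComplex.mem_of_sub_mem_span {X : Set (Set V)} (hX : IsPolyComplex X)
    {σ σ' : Set V} (hσ : σ ∈ X) (hσ' : σ' ∈ X) {C : PointedCone ℝ V}
    (hCσ : (C : Set V) ⊆ recCone σ) (hCσ' : (C : Set V) ⊆ recCone σ') {x x' : V}
    (hx : x ∈ σ) (hx' : x' ∈ σ') (hspan : x' - x ∈ Submodule.span ℝ (C : Set V)) : x' ∈ σ := by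
  obtain ⟨a, ha, b, hb, hab⟩ := C.exists_sub_eq_of_mem_span hspan
  have hmid : x' + b ∈ σ ∩ σ' := by
    refine ⟨?_, by simpa using hCσ' hb x' hx' 1 zero_le_one⟩
    have hxa : x' + b = x + (1 : ℝ) • a := by
      calc x' + b = x + (x' - x) + b := by abel
        _ = x + (1 : ℝ) • a := by rw [← hab, one_smul]; abel
    exact hxa ▸ hCσ ha x hx 1 zero_le_one
  have hend : x' + (2 : ℝ) • b ∈ σ' := hCσ' hb x' hx' 2 zero_le_two
  have hseg : x' + b ∈ openSegment ℝ x' (x' + (2 : ℝ) • b) :=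
    ⟨1 / 2, 1 / 2, by norm_num, by norm_num, by norm_num, by module⟩
  exact ((hX.2.2 σ hσ σ' hσ' ⟨_, hmid⟩).2.isExtreme.left_mem_of_mem_openSegment
    hx' hend hmid hseg).1

end Polyhedra

section Compactification

variable {n : ℕ}

lemma mk_mem_faceSet_iff {S : Set (Set (Fin n → ℝ))} {σ ρ η : Set (Fin n → ℝ)}
    {y : Fin n → ℝ} :
    (⟨η, Submodule.Quotient.mk y⟩ : TPoint n) ∈ faceSet S σ ρ ↔
      η ∈ S ∧ ρ ⊆ η ∧ η ⊆ recCone σ ∧ ∃ x ∈ σ, y - x ∈ Submodule.span ℝ η := by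
  constructor
  · rintro ⟨η, hηS, hρη, hησ, x, hx, heq⟩
    obtain ⟨rfl, heq⟩ := Sigma.mk.inj_iff.mp heq
    exact ⟨hηS, hρη, hησ, x, hx, (Submodule.Quotient.eq _).mp (eq_of_heq heq)⟩
  · rintro ⟨hηS, hρη, hησ, x, hx, hyx⟩
    exact ⟨η, hηS, hρη, hησ, x, hx, by rw [(Submodule.Quotient.eq _).mpr hyx]⟩

lemma faceSet_mono {S : Set (Set (Fin n → ℝ))} {σ σ' ρ ρ' : Set (Fin n → ℝ)}
    (hσ : IsPolyhedron σ) (hσ' : σ'.Nonempty) (hσσ' : σ' ⊆ σ) (hρρ' : ρ ⊆ ρ') :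
    faceSet S σ' ρ' ⊆ faceSet S σ ρ := by
  rintro _ ⟨η, hηS, hρ'η, hησ', x, hx, rfl⟩
  exact ⟨η, hηS, hρρ'.trans hρ'η, hησ'.trans (hσ.recCone_mono hσσ' hσ'), x, hσσ' hx, rfl⟩

lemma subset_and_subset_of_faceSet_subset {X S : Set (Set (Fin n → ℝ))} (hX : IsPolyComplex X)
    (hS : S = {C | ∃ σ ∈ X, C = recCone σ}) {σ σ' ρ ρ' : Set (Fin n → ℝ)} (hσ : σ ∈ X)
    (hσ' : σ' ∈ X) (hρ' : ρ' ∈ S) (hρ'σ' : ρ' ⊆ recCone σ')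
    (h : faceSet S σ' ρ' ⊆ faceSet S σ ρ) : σ' ⊆ σ ∧ ρ ⊆ ρ' := by
  have hpt : ∀ x' ∈ σ', ρ ⊆ ρ' ∧ ρ' ⊆ recCone σ ∧ ∃ x ∈ σ, x' - x ∈ Submodule.span ℝ ρ' :=
    fun x' hx' ↦ (mk_mem_faceSet_iff.1 (h (mk_mem_faceSet_iff.2
      ⟨hρ', subset_rfl, hρ'σ', x', hx', by simp⟩))).2
  obtain ⟨x₀, hx₀⟩ := (hX.1 σ' hσ').1
  refine ⟨fun x' hx' ↦ ?_, (hpt x₀ hx₀).1⟩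
  obtain ⟨τ, -, rfl⟩ := hS ▸ hρ'
  obtain ⟨-, hτσ, x, hx, hspan⟩ := hpt x' hx'
  exact hX.mem_of_sub_mem_span (C := recessionCone τ) hσ hσ' hτσ hρ'σ' hx hx' hspan

lemma faceSet_subset_faceSet_iff {X S : Set (Set (Fin n → ℝ))} (hX : IsPolyComplex X)
    (hS : S = {C | ∃ σ ∈ X, C = recCone σ}) (q q' : PairPoset X S) :
    faceSet S q'.1.1 q'.1.2 ⊆ faceSet S q.1.1 q.1.2 ↔ q' ≤ q :=
  ⟨subset_and_subset_of_faceSet_subset hX hS q.2.1 q'.2.1 q'.2.2.1 q'.2.2.2,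
    fun hle ↦ faceSet_mono (hX.1 _ q.2.1) (hX.1 _ q'.2.1).1 hle.1 hle.2⟩

end Compactification

theorem face_poset_canonical_compactification_general {n : ℕ}
    (X S : Set (Set (Fin n → ℝ)))
    (hX : IsPolyComplex X)
    (hS : S = {C | ∃ σ ∈ X, C = recCone σ}) :
    ∃ e : PairPoset X S ≃o
        ↥{A : Set (TPoint n) | ∃ q : PairPoset X S, A = faceSet S q.1.1 q.1.2},
      ∀ q : PairPoset X S, (e q : Set (TPoint n)) = faceSet S q.1.1 q.1.2 := by
  let f : PairPoset X S ↪o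
      ↥{A : Set (TPoint n) | ∃ q : PairPoset X S, A = faceSet S q.1.1 q.1.2} :=
    OrderEmbedding.ofMapLEIff (fun q ↦ ⟨faceSet S q.1.1 q.1.2, q, rfl⟩)
      fun a b ↦ faceSet_subset_faceSet_iff hX hS b a
  have hf : Function.Surjective f := by
    rintro ⟨_, q, rfl⟩
    exact ⟨q, rfl⟩
  exact ⟨OrderIso.ofSurjective f hf, fun q ↦ rfl⟩

/-- Let `X` be a polyhedral complex in `ℝⁿ` (containing a vertex) whose
recession cones form a pointed fan `Σ`.  The face poset of the canonical
compactification of `X` in the tropical toric variety `TΣ` (the faces being the sets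
`faceSet Σ σ ρ`, ordered by inclusion) is isomorphic to the subposet of `X × Σ`
consisting of the pairs `(σ, ρ)` with `ρ ⊆ RecCone(σ)`, where
`(σ', ρ') ≤ (σ, ρ)` iff `σ' ≤ σ` in `X` and `ρ ≤ ρ'` in `Σ`. -/
theorem face_poset_canonical_compactification {n : ℕ}
    (X S : Set (Set (Fin n → ℝ)))
    (hX : IsPolyComplex X) (hvert : ∃ σ ∈ X, ∃ x, σ = {x})
    (hS : S = {C | ∃ σ ∈ X, C = recCone σ}) (hSfan : IsPointedFan S) :
    ∃ e : PairPoset X S ≃o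
        ↥{A : Set (TPoint n) | ∃ q : PairPoset X S, A = faceSet S q.1.1 q.1.2},
      ∀ q : PairPoset X S, (e q : Set (TPoint n)) = faceSet S q.1.1 q.1.2 :=
  face_poset_canonical_compactification_general X S hX hS
end

section
/- Two finite regular CW complexes whose face posets are isomorphic have homeomorphic underlying spaces; moreover the homeomorphism can be chosen to send each cell to the corresponding cell under the poset isomorphism. -/
/-!
Barycentric subdivision, made explicit: a point of `X` is sent to a probability vector on the
face poset `P`, supported on a chain. This identifies `X` with the geometric
realization `|Δ(P)|` of the order complex of `P`, the cell `i` going onto `|Δ(P≤i)|`. The map is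
built by induction on the dimension of the cells: `|Δ(P≤i)|` is the cone with apex the vertex `i`
over `|Δ(P<i)|`, which by induction is the image of the boundary sphere of the cell `i`, and the
radial structure of the closed ball extends the map over the cell. A continuous injection of the
compact space `X` is an embedding, and a poset isomorphism `P ≃o Q` relabels coordinates, carrying
`|Δ(P≤i)|` onto `|Δ(Q≤φ i)|`.
-/

/-- A finite regular CW complex on a topological space `X`: a finite family of
cells `cell i ⊆ X`, each with a chosen homeomorphism to a closed ball
`D^{dim i}`. -/
structure RegCW (X : Type*) [TopologicalSpace X] where
  ι : Type
  [fin : Finite ι]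
  dim : ι → ℕ
  cell : ι → Set X
  inj : Function.Injective cell
  hom : ∀ i, (cell i) ≃ₜ (Metric.closedBall (0 : EuclideanSpace ℝ (Fin (dim i))) 1)

attribute [instance] RegCW.fin

/-- The relative interior of a cell (the image of the open ball). -/
def RegCW.relint {X : Type*} [TopologicalSpace X] (C : RegCW X) (i : C.ι) : Set X :=
  Subtype.val ''
    ((C.hom i).symm ''
      {y : (Metric.closedBall (0 : EuclideanSpace ℝ (Fin (C.dim i))) 1 : Set _) |
        ‖(y : EuclideanSpace ℝ (Fin (C.dim i)))‖ < 1})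

/-- The regular CW complex axioms: the relative interiors of the cells partition the
space, and each relative boundary is a union of cells of smaller dimension. -/
def RegCW.IsValid {X : Type*} [TopologicalSpace X] (C : RegCW X) : Prop :=
  (∀ i j, i ≠ j → Disjoint (C.relint i) (C.relint j)) ∧
  (⋃ i, C.relint i) = Set.univ ∧
  ∀ i, ∃ J : Set C.ι, (∀ j ∈ J, C.dim j < C.dim i) ∧
    C.cell i \ C.relint i = ⋃ j ∈ J, C.cell j

open Set Function Filter Topology Metric

theorem IsChain.exists_isGreatest {P : Type*} [Preorder P] {s : Set P}
    (hs : IsChain (· ≤ ·) s) (hfin : s.Finite) (hne : s.Nonempty) : ∃ m, IsGreatest s m := by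
  obtain ⟨m, hm⟩ := hfin.exists_maximal hne
  exact ⟨m, hm.1, fun a ha => (hs.total ha hm.1).elim id fun h => hm.2 ha h⟩

theorem continuousOn_biUnion_of_isClosed {ι X Y : Type*} [TopologicalSpace X]
    [TopologicalSpace Y] [Finite ι] {f : X → Y} {t : ι → Set X} {s : Set ι}
    (hcl : ∀ i ∈ s, IsClosed (t i)) (hf : ∀ i ∈ s, ContinuousOn f (t i)) :
    ContinuousOn f (⋃ i ∈ s, t i) := by
  rw [biUnion_eq_iUnion]
  exact (locallyFinite_of_finite _).continuousOn_iUnion (fun i => hcl i i.2) fun i => hf i i.2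

theorem support_nonempty_of_mem_stdSimplex {P : Type*} [Fintype P] {w : P → ℝ}
    (hw : w ∈ stdSimplex ℝ P) : (support w).Nonempty := by
  by_contra! h
  simpa [support_eq_empty_iff.mp h] using hw.2

section StdSimplex
variable {P : Type*} [Fintype P] [DecidableEq P] {w : P → ℝ}

theorem update_zero_nonneg_of_mem_stdSimplex (hw : w ∈ stdSimplex ℝ P) (i : P) :
    0 ≤ update w i 0 := by
  rw [le_update_iff]; exact ⟨le_rfl, fun k _ => hw.1 k⟩

theorem sum_update_zero_of_mem_stdSimplex (hw : w ∈ stdSimplex ℝ P) (i : P) :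
    ∑ k, update w i 0 k = 1 - w i := by
  rw [Finset.sum_update_of_mem (Finset.mem_univ i), ← hw.2,
    Finset.sum_eq_add_sum_sdiff_singleton_of_mem (Finset.mem_univ i) w]
  ring

theorem eq_single_of_mem_stdSimplex (hw : w ∈ stdSimplex ℝ P) {i : P} (h1 : w i = 1) :
    w = Pi.single i 1 := by
  have hu : update w i 0 = 0 := funext fun k =>
    (Finset.sum_eq_zero_iff_of_nonneg fun k _ => update_zero_nonneg_of_mem_stdSimplex hw i k).mp
      (by rw [sum_update_zero_of_mem_stdSimplex hw, h1, sub_self]) k (Finset.mem_univ k)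
  rw [← update_eq_self i w, ← update_idem 0, hu, h1]
  rfl

theorem smul_update_zero_mem_stdSimplex (hw : w ∈ stdSimplex ℝ P) {i : P} (h1 : w i ≠ 1) :
    (1 - w i)⁻¹ • update w i 0 ∈ stdSimplex ℝ P := by
  have ht : 1 - w i ≠ 0 := sub_ne_zero.mpr h1.symm
  refine ⟨fun k => ?_, ?_⟩
  · exact mul_nonneg (inv_nonneg.mpr (sub_nonneg.mpr (mem_Icc_of_mem_stdSimplex hw i).2))
      (update_zero_nonneg_of_mem_stdSimplex hw i k)
  · simp only [Pi.smul_apply, smul_eq_mul, ← Finset.mul_sum,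
      sum_update_zero_of_mem_stdSimplex hw, inv_mul_cancel₀ ht]

end StdSimplex

section ChainSimplex
variable {P : Type*} [PartialOrder P] [Fintype P]

/-- The geometric realization `|Δ(s)|` of the order complex of `s`, inside the standard simplex
on `P`: the probability vectors supported on a chain of `s`. -/
def chainSimplex (s : Set P) : Set (P → ℝ) :=
  {w | w ∈ stdSimplex ℝ P ∧ IsChain (· ≤ ·) (support w) ∧ support w ⊆ s}

theorem chainSimplex_mono {s t : Set P} (hst : s ⊆ t) : chainSimplex s ⊆ chainSimplex t :=
  fun _ ⟨hw, hc, hs⟩ => ⟨hw, hc, hs.trans hst⟩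

theorem isBounded_chainSimplex (s : Set P) : Bornology.IsBounded (chainSimplex s) :=
  bounded_stdSimplex P |>.subset fun _ hw => hw.1

theorem apply_eq_zero_of_mem_chainSimplex_Iio {i : P} {w : P → ℝ}
    (hw : w ∈ chainSimplex (Iio i)) : w i = 0 :=
  notMem_support.mp fun hi => lt_irrefl i (hw.2.2 hi)

theorem biUnion_chainSimplex_Iic_lt (i : P) :
    ⋃ j < i, chainSimplex (Iic j) = chainSimplex (Iio i) := by
  refine Subset.antisymm
    (iUnion₂_subset fun j hj => chainSimplex_mono fun k hk => lt_of_le_of_lt hk hj) ?_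
  rintro w ⟨hw, hc, hs⟩
  obtain ⟨m, hm, hmax⟩ :=
    hc.exists_isGreatest (toFinite _) (support_nonempty_of_mem_stdSimplex hw)
  exact mem_biUnion (hs hm) ⟨hw, hc, hmax⟩

theorem comp_mem_chainSimplex_iff {Q : Type*} [PartialOrder Q] [Fintype Q] (e : P ≃o Q)
    {s : Set P} {v : Q → ℝ} : v ∘ e ∈ chainSimplex s ↔ v ∈ chainSimplex (e '' s) := by
  have hsum : ∑ k, v (e k) = ∑ k, v k := e.toEquiv.sum_comp v
  have hsub : e ⁻¹' support v ⊆ s ↔ support v ⊆ e '' s := by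
    rw [← e.toEquiv.preimage_subset]; simp [e.preimage_image]
  simp only [chainSimplex, stdSimplex, mem_ofPred_eq, support_comp_eq_preimage,
    IsChain.preimage_iso_iff, comp_apply, hsum, e.surjective.forall, hsub]

theorem image_piCongrLeft_chainSimplex {Q : Type*} [PartialOrder Q] [Fintype Q] (e : P ≃o Q)
    (s : Set P) :
    Homeomorph.piCongrLeft (Y := fun _ : Q => ℝ) e.toEquiv '' chainSimplex s =
      chainSimplex (e '' s) := by
  ext v
  rw [Homeomorph.image_eq_preimage_symm]
  exact comp_mem_chainSimplex_iff e

variable [DecidableEq P]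

theorem single_mem_chainSimplex_Iic (i : P) : Pi.single i 1 ∈ chainSimplex (Iic i) := by
  refine ⟨single_mem_stdSimplex ℝ i, ?_, ?_⟩ <;> rw [Pi.support_single_of_ne one_ne_zero]
  · exact subsingleton_singleton.isChain
  · exact singleton_subset_iff.mpr self_mem_Iic

theorem segment_subset_chainSimplex_Iic {i : P} {z : P → ℝ} (hz : z ∈ chainSimplex (Iio i)) :
    segment ℝ (Pi.single i 1) z ⊆ chainSimplex (Iic i) := by
  rintro _ ⟨a, b, ha, hb, hab, rfl⟩
  have hsupp : support (a • Pi.single i 1 + b • z) ⊆ insert i (support z) := by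
    refine (support_add _ _).trans (union_subset ?_ ?_)
    · exact (support_smul_subset_right _ _).trans (by simp [Pi.support_single_of_ne])
    · exact (support_smul_subset_right _ _).trans (subset_insert _ _)
  refine ⟨convex_stdSimplex ℝ P (single_mem_stdSimplex ℝ i) hz.1 ha hb hab,
    (hz.2.1.insert fun k hk _ => Or.inr (hz.2.2 hk).le).mono hsupp, hsupp.trans ?_⟩
  exact insert_subset self_mem_Iic (hz.2.2.trans Iio_subset_Iic_self)

theorem chainSimplex_Iic_eq (i : P) :
    chainSimplex (Iic i) =
      insert (Pi.single i 1) (convexJoin ℝ {Pi.single i 1} (chainSimplex (Iio i))) := by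
  refine Subset.antisymm ?_ (insert_subset (single_mem_chainSimplex_Iic i) ?_)
  · rintro w ⟨hw, hc, hs⟩
    by_cases h1 : w i = 1
    · exact Or.inl (eq_single_of_mem_stdSimplex hw h1)
    have ht : 1 - w i ≠ 0 := sub_ne_zero.mpr (Ne.symm h1)
    have hz : support ((1 - w i)⁻¹ • update w i 0) ⊆ support w \ {i} :=
      (support_smul_subset_right _ _).trans (support_update_zero w i).subset
    refine Or.inr (mem_convexJoin.mpr ⟨_, rfl, _, ⟨smul_update_zero_mem_stdSimplex hw h1,
      hc.mono (hz.trans sdiff_subset), fun k hk => (hs (hz hk).1).lt_of_ne (hz hk).2⟩,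
      w i, 1 - w i, hw.1 i, sub_nonneg.mpr (mem_Icc_of_mem_stdSimplex hw i).2, by ring, ?_⟩)
    rw [smul_inv_smul₀ ht]
    ext k
    by_cases h : k = i <;> simp [h]
  · rw [convexJoin_singleton_left]
    exact iUnion₂_subset fun z hz => segment_subset_chainSimplex_Iic hz

end ChainSimplex

section RadialCone
variable {X E V : Type*} [TopologicalSpace X] [NormedAddCommGroup E] {K : Set X}
  (e : K ≃ₜ closedBall (0 : E) 1)

def ballInterior : Set X := Subtype.val '' (e.symm '' {y | ‖(y : E)‖ < 1})

variable {e}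

theorem ballInterior_subset : ballInterior e ⊆ K := by
  rintro _ ⟨x, -, rfl⟩; exact x.2

theorem mem_ballInterior_iff {x : X} (hx : x ∈ K) :
    x ∈ ballInterior e ↔ ‖(e ⟨x, hx⟩ : E)‖ < 1 := by
  constructor
  · rintro ⟨_, ⟨y, hy, rfl⟩, rfl⟩
    simpa using hy
  · exact fun h => ⟨⟨x, hx⟩, ⟨e ⟨x, hx⟩, h, e.symm_apply_apply _⟩, rfl⟩

theorem norm_eq_one_of_notMem_ballInterior {x : K} (hx : (x : X) ∉ ballInterior e) :
    ‖(e x : E)‖ = 1 :=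
  (mem_closedBall_zero_iff.mp (e x).2).antisymm (not_lt.mp ((mem_ballInterior_iff x.2).not.mp hx))

variable [NormedSpace ℝ E] [NormedAddCommGroup V] [NormedSpace ℝ V] (e)

-- At the centre this is `e.symm 0`, not a boundary point; `radialCone` weights it by `0`.
noncomputable def radialRetract (x : K) : K :=
  e.symm ⟨‖(e x : E)‖⁻¹ • (e x : E), inv_norm_smul_mem_unitClosedBall _⟩

open Classical in
noncomputable def radialCone (a : V) (f : X → V) (x : X) : V :=
  if hx : x ∈ K then
    (1 - ‖(e ⟨x, hx⟩ : E)‖) • a + ‖(e ⟨x, hx⟩ : E)‖ • f (radialRetract e ⟨x, hx⟩)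
  else f x

variable {e}

theorem radialRetract_notMem_ballInterior {x : K} (hx : (e x : E) ≠ 0) :
    (radialRetract e x : X) ∉ ballInterior e := by
  rw [mem_ballInterior_iff (radialRetract e x).2, Subtype.coe_eta, radialRetract,
    e.apply_symm_apply, not_lt]
  exact (norm_smul_inv_norm hx).ge

theorem radialRetract_eq_self {x : K} (hx : (x : X) ∉ ballInterior e) :
    radialRetract e x = x := by
  have h1 := norm_eq_one_of_notMem_ballInterior hx
  rw [radialRetract, e.symm_apply_eq]
  ext1; simp [h1]

variable {a : V} {f : X → V}

theorem radialCone_apply {x : X} (hx : x ∈ K) : radialCone e a f x =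
    (1 - ‖(e ⟨x, hx⟩ : E)‖) • a + ‖(e ⟨x, hx⟩ : E)‖ • f (radialRetract e ⟨x, hx⟩) := by
  simp [radialCone, hx]

theorem radialCone_eq_of_notMem_ballInterior {x : X} (hx : x ∈ K) (hx' : x ∉ ballInterior e) :
    radialCone e a f x = f x := by
  rw [radialCone_apply hx, norm_eq_one_of_notMem_ballInterior hx', radialRetract_eq_self hx']
  simp

theorem norm_smul_radialRetract (x : K) :
    ‖(e x : E)‖ • (e (radialRetract e x) : E) = e x := by
  rw [radialRetract, e.apply_symm_apply]
  rcases eq_or_ne (e x : E) 0 with h | h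
  · simp [h]
  · exact smul_inv_smul₀ (norm_ne_zero_iff.mpr h) _

theorem continuousAt_radialRetract {x : K} (hx : (e x : E) ≠ 0) :
    ContinuousAt (fun y => (radialRetract e y : X)) x := by
  have hv : Continuous fun y : K => (e y : E) := continuous_subtype_val.comp e.continuous
  have hproj : ContinuousAt (fun y : K => (⟨‖(e y : E)‖⁻¹ • (e y : E),
      inv_norm_smul_mem_unitClosedBall _⟩ : closedBall (0 : E) 1)) x :=
    IsInducing.subtypeVal.continuousAt_iff.mpr
      ((hv.norm.continuousAt.inv₀ (norm_ne_zero_iff.mpr hx)).smul hv.continuousAt)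
  exact continuous_subtype_val.continuousAt.comp (e.symm.continuous.continuousAt.comp hproj)

theorem continuousOn_radialCone (hf : ContinuousOn f (K \ ballInterior e))
    (hb : Bornology.IsBounded (f '' (K \ ballInterior e))) :
    ContinuousOn (radialCone e a f) K := by
  have hv : Continuous fun y : K => (e y : E) := continuous_subtype_val.comp e.continuous
  rw [continuousOn_iff_continuous_domRestrict,
    show K.domRestrict (radialCone e a f) = fun x => (1 - ‖(e x : E)‖) • a +
      ‖(e x : E)‖ • f (radialRetract e x) from funext fun x => radialCone_apply x.2]
  refine ((continuous_const.sub hv.norm).smul continuous_const).add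
    (continuous_iff_continuousAt.mpr fun x => ?_)
  rcases eq_or_ne (e x : E) 0 with h0 | h0
  · -- near the apex the cone coordinate `‖e y‖` kills the bounded factor `f (radialRetract y)`
    obtain ⟨M, hM⟩ := hb.exists_norm_le
    have hbound : ∀ y : K, ‖‖(e y : E)‖ • f (radialRetract e y)‖ ≤ M * ‖(e y : E)‖ := by
      intro y
      rcases eq_or_ne (e y : E) 0 with hy | hy
      · simp [hy]
      · rw [norm_smul, norm_norm, mul_comm]
        exact mul_le_mul_of_nonneg_right (hM _ (mem_image_of_mem f
          ⟨(radialRetract e y).2, radialRetract_notMem_ballInterior hy⟩)) (norm_nonneg _)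
    have hlim : Tendsto (fun y : K => M * ‖(e y : E)‖) (𝓝 x) (𝓝 0) :=
      (continuous_const.mul hv.norm).tendsto' x 0 (by simp [h0])
    simpa [ContinuousAt, h0] using squeeze_zero_norm hbound hlim
  · refine hv.norm.continuousAt.smul ?_
    have hev : ∀ᶠ y in 𝓝 x, (radialRetract e y : X) ∈ K \ ballInterior e :=
      (hv.continuousAt.eventually_ne h0).mono fun y hy =>
        ⟨(radialRetract e y).2, radialRetract_notMem_ballInterior hy⟩
    have hfr := (hf _ ⟨(radialRetract e x).2, radialRetract_notMem_ballInterior h0⟩)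
      |>.comp_of_preimage_mem_nhdsWithin (f := fun y => (radialRetract e y : X)) (s := univ)
        (continuousAt_radialRetract h0).continuousWithinAt (by rw [nhdsWithin_univ]; exact hev)
    exact continuousWithinAt_univ _ _ |>.mp hfr

theorem map_radialCone (ℓ : V →ₗ[ℝ] ℝ) (hℓa : ℓ a = 1)
    (hℓf : ∀ x ∈ K \ ballInterior e, ℓ (f x) = 0) {x : X} (hx : x ∈ K) :
    ℓ (radialCone e a f x) = 1 - ‖(e ⟨x, hx⟩ : E)‖ := by
  rw [radialCone_apply hx, map_add, map_smul, map_smul, hℓa, smul_eq_mul, smul_eq_mul]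
  rcases eq_or_ne (e ⟨x, hx⟩ : E) 0 with h | h
  · simp [h]
  · rw [hℓf _ ⟨(radialRetract e _).2, radialRetract_notMem_ballInterior h⟩]; ring

theorem injOn_radialCone (ℓ : V →ₗ[ℝ] ℝ) (hℓa : ℓ a = 1)
    (hℓf : ∀ x ∈ K \ ballInterior e, ℓ (f x) = 0) (hf : InjOn f (K \ ballInterior e)) :
    InjOn (radialCone e a f) K := by
  intro x hx y hy hxy
  have hnorm : ‖(e ⟨x, hx⟩ : E)‖ = ‖(e ⟨y, hy⟩ : E)‖ := by
    have := congrArg ℓ hxy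
    rw [map_radialCone ℓ hℓa hℓf hx, map_radialCone ℓ hℓa hℓf hy] at this
    linarith
  suffices (e ⟨x, hx⟩ : E) = e ⟨y, hy⟩ from congrArg Subtype.val (e.injective (Subtype.ext this))
  rcases eq_or_ne (e ⟨x, hx⟩ : E) 0 with h | h
  · rw [h, eq_comm, ← norm_eq_zero, ← hnorm, h, norm_zero]
  have h' : (e ⟨y, hy⟩ : E) ≠ 0 := by rwa [← norm_ne_zero_iff, ← hnorm, norm_ne_zero_iff]
  rw [radialCone_apply hx, radialCone_apply hy, hnorm] at hxy
  have hr : radialRetract e ⟨x, hx⟩ = radialRetract e ⟨y, hy⟩ := Subtype.ext <|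
    hf ⟨(radialRetract e _).2, radialRetract_notMem_ballInterior h⟩
      ⟨(radialRetract e _).2, radialRetract_notMem_ballInterior h'⟩
      (smul_right_injective V (norm_ne_zero_iff.mpr h') (add_left_cancel hxy))
  rw [← norm_smul_radialRetract, ← norm_smul_radialRetract ⟨y, hy⟩, hnorm, hr]

theorem radialCone_symm_smul {y : K} (hy : (y : X) ∉ ballInterior e) {θ : ℝ}
    (hθ : 0 ≤ θ) (hmem : θ • (e y : E) ∈ closedBall (0 : E) 1) :
    radialCone e a f (e.symm ⟨θ • (e y : E), hmem⟩ : X) = (1 - θ) • a + θ • f y := by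
  have hnorm : ‖θ • (e y : E)‖ = θ := by
    rw [norm_smul, norm_eq_one_of_notMem_ballInterior hy, mul_one, Real.norm_of_nonneg hθ]
  rw [radialCone_apply (e.symm _).2, Subtype.coe_eta]
  rcases eq_or_ne θ 0 with rfl | hθ0
  · simp
  have hr : radialRetract e (e.symm ⟨θ • (e y : E), hmem⟩) = y := by
    rw [radialRetract, e.symm_apply_eq]
    ext1
    simp only [e.apply_symm_apply, hnorm, smul_smul, inv_mul_cancel₀ hθ0, one_smul]
  rw [hr, e.apply_symm_apply, hnorm]

theorem image_radialCone :
    radialCone e a f '' K = insert a (convexJoin ℝ {a} (f '' (K \ ballInterior e))) := by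
  apply Subset.antisymm
  · rintro _ ⟨x, hx, rfl⟩
    rw [radialCone_apply hx]
    rcases eq_or_ne (e ⟨x, hx⟩ : E) 0 with h | h
    · simp [h]
    refine Or.inr (mem_convexJoin.mpr ⟨a, rfl, _, mem_image_of_mem f
      ⟨(radialRetract e _).2, radialRetract_notMem_ballInterior h⟩, ?_⟩)
    exact ⟨_, _, sub_nonneg.mpr (mem_closedBall_zero_iff.mp (e _).2), norm_nonneg _, by ring, rfl⟩
  · refine insert_subset ⟨e.symm ⟨0, mem_closedBall_self zero_le_one⟩, (e.symm _).2, ?_⟩ ?_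
    · rw [radialCone_apply (e.symm _).2, Subtype.coe_eta, e.apply_symm_apply]; simp
    rw [convexJoin_singleton_left]
    intro z hz
    obtain ⟨_, ⟨x, hx, rfl⟩, hz⟩ := mem_iUnion₂.mp hz
    rw [segment_eq_image] at hz
    obtain ⟨θ, hθ, rfl⟩ := hz
    have hmem : θ • (e ⟨x, hx.1⟩ : E) ∈ closedBall (0 : E) 1 := by
      rw [mem_closedBall_zero_iff, norm_smul, norm_eq_one_of_notMem_ballInterior hx.2, mul_one,
        Real.norm_of_nonneg hθ.1]
      exact hθ.2
    exact ⟨_, (e.symm _).2, radialCone_symm_smul hx.2 hθ.1 hmem⟩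

end RadialCone

section Homeomorph
variable {X Y Z W : Type*} [TopologicalSpace X] [TopologicalSpace Y] [TopologicalSpace Z]
  [TopologicalSpace W] {F : X → Z} {G : Y → W}

theorem Topology.IsEmbedding.exists_homeomorph_of_image_range_eq (hF : IsEmbedding F)
    (hG : IsEmbedding G) (T : Z ≃ₜ W) (hT : T '' range F = range G) :
    ∃ h : X ≃ₜ Y, ∀ x, G (h x) = T (F x) := by
  refine ⟨hF.toHomeomorph.trans ((T.image (range F)).trans
    ((Homeomorph.setCongr hT).trans hG.toHomeomorph.symm)), fun x => ?_⟩
  exact congrArg Subtype.val (hG.toHomeomorph.apply_symm_apply _)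

theorem exists_homeomorph_image_eq_of_iUnion_eq_univ {ι ι' : Type*} {A : ι → Set X}
    {B : ι' → Set Y} (hA : ⋃ i, A i = univ) (hB : ⋃ j, B j = univ) (hF : IsEmbedding F)
    (hG : IsEmbedding G) (T : Z ≃ₜ W) (φ : ι ≃ ι') (hT : ∀ i, T '' (F '' A i) = G '' B (φ i)) :
    ∃ h : X ≃ₜ Y, ∀ i, h '' A i = B (φ i) := by
  have hrange : T '' range F = range G := by
    rw [← image_univ, ← hA, ← image_univ, ← hB, image_iUnion, image_iUnion, image_iUnion]
    simp_rw [hT]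
    exact φ.iSup_comp (g := fun j => G '' B j)
  obtain ⟨h, hh⟩ := hF.exists_homeomorph_of_image_range_eq hG T hrange
  refine ⟨h, fun i => hG.injective.image_injective ?_⟩
  rw [← image_comp, show G ∘ h = T ∘ F from funext hh, image_comp, hT]

end Homeomorph

namespace RegCW
variable {X : Type*} [TopologicalSpace X] (C : RegCW X)

instance : PartialOrder C.ι := PartialOrder.lift C.cell C.inj

theorem relint_eq_ballInterior (i : C.ι) : C.relint i = ballInterior (C.hom i) := rfl

theorem relint_subset_cell (i : C.ι) : C.relint i ⊆ C.cell i := ballInterior_subset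

theorem relint_nonempty (i : C.ι) : (C.relint i).Nonempty :=
  ⟨_, _, ⟨⟨0, mem_closedBall_self zero_le_one⟩, by simp, rfl⟩, rfl⟩

theorem isCompact_cell (i : C.ι) : IsCompact (C.cell i) :=
  isCompact_iff_compactSpace.mpr (C.hom i).symm.compactSpace

variable {C}

namespace IsValid
variable (hC : C.IsValid)
include hC

theorem iUnion_cell : ⋃ i, C.cell i = univ :=
  eq_univ_of_univ_subset (hC.2.1 ▸ iUnion_mono C.relint_subset_cell)

theorem compactSpace : CompactSpace X :=
  isCompact_univ_iff.mp (hC.iUnion_cell ▸ isCompact_iUnion C.isCompact_cell)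

theorem eq_of_mem_relint {i j : C.ι} {x : X} (hi : x ∈ C.relint i) (hj : x ∈ C.relint j) :
    i = j :=
  by_contra fun h => disjoint_left.mp (hC.1 i j h) hi hj

theorem exists_dim_lt_of_notMem_relint {i : C.ι} {x : X} (hx : x ∈ C.cell i)
    (hx' : x ∉ C.relint i) : ∃ k ≤ i, C.dim k < C.dim i ∧ x ∈ C.cell k := by
  obtain ⟨J, hJdim, hJ⟩ := hC.2.2 i
  obtain ⟨k, hkJ, hxk⟩ := mem_iUnion₂.mp (hJ ▸ ⟨hx, hx'⟩ : x ∈ ⋃ k ∈ J, C.cell k)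
  exact ⟨k, fun y hy => (hJ ▸ mem_biUnion hkJ hy : y ∈ C.cell i \ C.relint i).1,
    hJdim k hkJ, hxk⟩

theorem le_of_mem_relint {i j : C.ι} {x : X} (hj : x ∈ C.relint j) (hi : x ∈ C.cell i) :
    j ≤ i := by
  induction hn : C.dim i using Nat.strong_induction_on generalizing i with
  | _ n ih =>
    by_cases hxi : x ∈ C.relint i
    · exact (hC.eq_of_mem_relint hj hxi).le
    obtain ⟨k, hki, hdim, hxk⟩ := hC.exists_dim_lt_of_notMem_relint hi hxi
    exact (ih _ (hn ▸ hdim) hxk rfl).trans hki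

theorem dim_strictMono : StrictMono C.dim := by
  intro j i hji
  induction hn : C.dim i using Nat.strong_induction_on generalizing i with
  | _ n ih =>
    obtain ⟨x, hx⟩ := C.relint_nonempty j
    have hxi : x ∉ C.relint i := fun h => hji.ne (hC.eq_of_mem_relint hx h)
    obtain ⟨k, hki, hdim, hxk⟩ :=
      hC.exists_dim_lt_of_notMem_relint (hji.le (C.relint_subset_cell j hx)) hxi
    subst hn
    rcases (hC.le_of_mem_relint hx hxk).lt_or_eq with hjk | rfl
    · exact (ih _ hdim hjk rfl).trans hdim
    · exact hdim

theorem cell_diff_relint (i : C.ι) : C.cell i \ C.relint i = ⋃ j < i, C.cell j := by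
  refine Subset.antisymm (fun x ⟨hx, hx'⟩ => ?_) (iUnion₂_subset fun j hj x hx => ⟨hj.le hx, ?_⟩)
  · obtain ⟨k, hki, hdim, hxk⟩ := hC.exists_dim_lt_of_notMem_relint hx hx'
    exact mem_biUnion (hki.lt_of_ne (by rintro rfl; exact hdim.false)) hxk
  · exact fun h => hj.not_ge (hC.le_of_mem_relint h hx)

noncomputable def carrier (x : X) : C.ι :=
  (mem_iUnion.mp (hC.2.1.symm ▸ mem_univ x : x ∈ ⋃ i, C.relint i)).choose

theorem mem_relint_carrier (x : X) : x ∈ C.relint (hC.carrier x) :=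
  (mem_iUnion.mp (hC.2.1.symm ▸ mem_univ x : x ∈ ⋃ i, C.relint i)).choose_spec

theorem carrier_eq_of_mem_relint {i : C.ι} {x : X} (hx : x ∈ C.relint i) : hC.carrier x = i :=
  hC.eq_of_mem_relint (hC.mem_relint_carrier x) hx

theorem carrier_le_iff {i : C.ι} {x : X} : hC.carrier x ≤ i ↔ x ∈ C.cell i :=
  ⟨fun h => h (C.relint_subset_cell _ (hC.mem_relint_carrier x)),
    hC.le_of_mem_relint (hC.mem_relint_carrier x)⟩

end IsValid

variable [Fintype C.ι]

structure RealizesCell (F : X → C.ι → ℝ) (i : C.ι) : Prop where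
  continuousOn : ContinuousOn F (C.cell i)
  injOn : InjOn F (C.cell i)
  image_eq : F '' C.cell i = chainSimplex (Iic i)
  apply_ne_zero : ∀ x ∈ C.relint i, F x i ≠ 0

theorem RealizesCell.congr {F G : X → C.ι → ℝ} {i : C.ι} (hF : RealizesCell F i)
    (hFG : EqOn F G (C.cell i)) : RealizesCell G i where
  continuousOn := hF.continuousOn.congr hFG.symm
  injOn := hF.injOn.congr hFG
  image_eq := hFG.image_eq ▸ hF.image_eq
  apply_ne_zero x hx := hFG (C.relint_subset_cell i hx) ▸ hF.apply_ne_zero x hx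

namespace IsValid
variable (hC : C.IsValid)
include hC

theorem injOn_of_realizesCell {F : X → C.ι → ℝ} {A : Set X}
    (hF : ∀ x ∈ A, RealizesCell F (hC.carrier x)) : InjOn F A := by
  intro x hx y hy hxy
  -- the carrier of `x` is the top of the chain supporting `F x`
  have htop : ∀ {x y}, x ∈ A → y ∈ A → F x = F y → hC.carrier x ≤ hC.carrier y := by
    intro x y hx hy hxy
    have hFy : F y ∈ chainSimplex (Iic (hC.carrier y)) :=
      (hF y hy).image_eq ▸ mem_image_of_mem F (C.relint_subset_cell _ (hC.mem_relint_carrier y))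
    exact hFy.2.2 (hxy ▸ (hF x hx).apply_ne_zero x (hC.mem_relint_carrier x))
  have hcar := (htop hx hy hxy).antisymm (htop hy hx hxy.symm)
  exact (hF x hx).injOn (C.relint_subset_cell _ (hC.mem_relint_carrier x))
    (hcar ▸ C.relint_subset_cell _ (hC.mem_relint_carrier y)) hxy

variable [T2Space X] [DecidableEq C.ι]

theorem realizesCell_radialCone {F : X → C.ι → ℝ} {i : C.ι} (hF : ∀ j < i, RealizesCell F j) :
    RealizesCell (radialCone (C.hom i) (Pi.single i 1) F) i := by
  have hbd := hC.cell_diff_relint i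
  rw [relint_eq_ballInterior] at hbd
  have himage : F '' (C.cell i \ ballInterior (C.hom i)) = chainSimplex (Iio i) := by
    rw [hbd, image_iUnion₂, ← biUnion_chainSimplex_Iic_lt]
    exact iUnion₂_congr fun j hj => (hF j hj).image_eq
  have hcont : ContinuousOn F (C.cell i \ ballInterior (C.hom i)) := hbd ▸
    continuousOn_biUnion_of_isClosed (fun j _ => (C.isCompact_cell j).isClosed)
      fun j hj => (hF j hj).continuousOn
  have hinj : InjOn F (C.cell i \ ballInterior (C.hom i)) := by
    refine hC.injOn_of_realizesCell fun x hx => hF _ ?_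
    refine (hC.carrier_le_iff.mpr hx.1).lt_of_ne fun h => hx.2 ?_
    exact h ▸ hC.mem_relint_carrier x
  let ℓ : (C.ι → ℝ) →ₗ[ℝ] ℝ := LinearMap.proj i
  have hℓf : ∀ x ∈ C.cell i \ ballInterior (C.hom i), ℓ (F x) = 0 :=
    fun x hx => show F x i = 0 from
      apply_eq_zero_of_mem_chainSimplex_Iio (himage ▸ mem_image_of_mem F hx)
  have hℓa : ℓ (Pi.single i 1) = 1 := Pi.single_eq_same i 1
  refine ⟨continuousOn_radialCone hcont (himage ▸ isBounded_chainSimplex _),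
    injOn_radialCone _ hℓa hℓf hinj, ?_, fun x hx => ?_⟩
  · rw [image_radialCone, himage, chainSimplex_Iic_eq]
  · show ℓ (radialCone (C.hom i) (Pi.single i 1) F x) ≠ 0
    rw [map_radialCone ℓ hℓa hℓf (C.relint_subset_cell i hx), sub_ne_zero]
    exact ((mem_ballInterior_iff _).mp hx).ne'

theorem exists_realizesCell (n : ℕ) :
    ∃ F : X → C.ι → ℝ, ∀ i, C.dim i < n → RealizesCell F i := by
  induction n with
  | zero => exact ⟨0, fun i h => absurd h (Nat.not_lt_zero _)⟩
  | succ n ih =>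
    obtain ⟨F, hF⟩ := ih
    let G : X → C.ι → ℝ := fun x =>
      if C.dim (hC.carrier x) < n then F x
      else radialCone (C.hom (hC.carrier x)) (Pi.single (hC.carrier x) 1) F x
    have hG_lt : ∀ x, C.dim (hC.carrier x) < n → G x = F x := fun x h => if_pos h
    refine ⟨G, fun i hi => ?_⟩
    rcases (Nat.lt_succ_iff.mp hi).lt_or_eq with hi | hi
    · refine (hF i hi).congr fun x hx => (hG_lt x ?_).symm
      exact (hC.dim_strictMono.monotone (hC.carrier_le_iff.mpr hx)).trans_lt hi
    refine (hC.realizesCell_radialCone fun j hj => hF j (hi ▸ hC.dim_strictMono hj)).congr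
      fun x hx => ?_
    rcases (hC.carrier_le_iff.mpr hx).lt_or_eq with hlt | heq
    · have hx' : x ∉ ballInterior (C.hom i) := fun h =>
        hlt.ne (hC.carrier_eq_of_mem_relint h)
      rw [hG_lt x (hi ▸ hC.dim_strictMono hlt), radialCone_eq_of_notMem_ballInterior hx hx']
    · have hG : G x = radialCone (C.hom (hC.carrier x)) (Pi.single (hC.carrier x) 1) F x :=
        if_neg (by rw [heq, hi]; exact lt_irrefl n)
      rw [hG, heq]

theorem exists_isClosedEmbedding_chainSimplex :
    ∃ F : X → C.ι → ℝ, IsClosedEmbedding F ∧ ∀ i, F '' C.cell i = chainSimplex (Iic i) := by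
  have := hC.compactSpace
  obtain ⟨F, hF⟩ := hC.exists_realizesCell (Finset.univ.sup C.dim + 1)
  have hF' : ∀ i, RealizesCell F i :=
    fun i => hF i (Nat.lt_succ_of_le (Finset.le_sup (Finset.mem_univ i)))
  have hcont : Continuous F := by
    rw [← continuousOn_univ, ← hC.iUnion_cell, ← biUnion_univ]
    exact continuousOn_biUnion_of_isClosed (fun j _ => (C.isCompact_cell j).isClosed)
      fun j _ => (hF' j).continuousOn
  have hinj : Injective F := injOn_univ.mp (hC.injOn_of_realizesCell fun x _ => hF' _)
  exact ⟨F, hcont.isClosedEmbedding hinj, fun i => (hF' i).image_eq⟩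

end IsValid
end RegCW

/-- Two finite regular CW complexes (on Hausdorff spaces) whose face
posets are isomorphic have homeomorphic underlying spaces; moreover the homeomorphism
can be chosen to send each cell to the corresponding cell under the poset
isomorphism. -/
theorem regCW_homeomorph_of_posetIso {X Y : Type*} [TopologicalSpace X]
    [TopologicalSpace Y] [T2Space X] [T2Space Y]
    (C : RegCW X) (D : RegCW Y) (hC : C.IsValid) (hD : D.IsValid)
    (φ : C.ι ≃ D.ι)
    (hφ : ∀ i j, C.cell i ⊆ C.cell j ↔ D.cell (φ i) ⊆ D.cell (φ j)) :
    ∃ h : X ≃ₜ Y, ∀ i, h '' C.cell i = D.cell (φ i) := by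
  classical
  let _ : Fintype C.ι := Fintype.ofFinite _
  let _ : Fintype D.ι := Fintype.ofFinite _
  let ψ : C.ι ≃o D.ι := ⟨φ, (hφ _ _).symm⟩
  obtain ⟨F, hF, hFcell⟩ := hC.exists_isClosedEmbedding_chainSimplex
  obtain ⟨G, hG, hGcell⟩ := hD.exists_isClosedEmbedding_chainSimplex
  refine exists_homeomorph_image_eq_of_iUnion_eq_univ hC.iUnion_cell hD.iUnion_cell
    hF.isEmbedding hG.isEmbedding (Homeomorph.piCongrLeft (Y := fun _ => ℝ) ψ.toEquiv) φ
    fun i => ?_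
  rw [hFcell, hGcell, image_piCongrLeft_chainSimplex, ψ.image_Iic]
  rfl
end

section
/- Let Σ be a complete unimodular fan in R^n. For each cone σ ∈ Σ with primitive ray generators v_1,...,v_k, let C_σ be the parallelepiped (cube) {∑ t_i v_i : t_i ∈ [0,1]}, i.e. the convex hull of the points ∑_{i∈I} v_i over I ⊆ {1,...,k}. Then the union pStar(R^n) = ⋃_{σ∈Σ} C_σ is a compact neighbourhood of the origin that is star-shaped with respect to 0, and the collection {C_σ : σ ∈ Σ} together with their faces forms a polyhedral complex covering it. -/
open Set Module

/-- `Icc l h` is one of the nonempty faces `[L, H]`, `{L}`, `{H}` of `Icc L H`. -/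
def IsIccFace (L H l h : ℝ) : Prop :=
  (l = L ∧ h = H) ∨ (l = L ∧ h = L) ∨ (l = H ∧ h = H)

namespace IsIccFace

variable {L H l h l' h' : ℝ}

theorem refl (L H : ℝ) : IsIccFace L H L H := Or.inl ⟨rfl, rfl⟩

theorem trans (hf : IsIccFace L H l h) (hf' : IsIccFace l h l' h') : IsIccFace L H l' h' := by
  rcases hf with ⟨rfl, rfl⟩ | ⟨rfl, rfl⟩ | ⟨rfl, rfl⟩ <;>
    rcases hf' with ⟨rfl, rfl⟩ | ⟨rfl, rfl⟩ | ⟨rfl, rfl⟩ <;> simp [IsIccFace]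

theorem le (hLH : L ≤ H) (hf : IsIccFace L H l h) : L ≤ l ∧ l ≤ h ∧ h ≤ H := by
  rcases hf with ⟨rfl, rfl⟩ | ⟨rfl, rfl⟩ | ⟨rfl, rfl⟩ <;> simp [hLH]

theorem sup_inf (hLH : L ≤ H) (hf : IsIccFace L H l h) (hf' : IsIccFace L H l' h')
    (hne : l ⊔ l' ≤ h ⊓ h') : IsIccFace l h (l ⊔ l') (h ⊓ h') := by
  rcases hf with ⟨rfl, rfl⟩ | ⟨rfl, rfl⟩ | ⟨rfl, rfl⟩ <;>
    rcases hf' with ⟨rfl, rfl⟩ | ⟨rfl, rfl⟩ | ⟨rfl, rfl⟩ <;>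
    simp_all [IsIccFace, le_antisymm_iff]

theorem exists_supporting (hf : IsIccFace L H l h) :
    ∃ a c : ℝ, ∀ t ∈ Icc L H, a * t ≤ c ∧ (a * t = c ↔ t ∈ Icc l h) := by
  rcases hf with ⟨hl, hh⟩ | ⟨hl, hh⟩ | ⟨hl, hh⟩ <;> rw [hl, hh]
  · exact ⟨0, 0, fun t ht => by simp [ht]⟩
  · exact ⟨-1, -L, fun t ht => ⟨by linarith [ht.1], by rw [neg_one_mul, neg_inj, Icc_self]; rfl⟩⟩
  · exact ⟨1, H, fun t ht => ⟨by linarith [ht.2], by rw [one_mul, Icc_self]; rfl⟩⟩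

end IsIccFace

theorem exists_isIccFace_maximizers (L H a : ℝ) :
    ∃ l h, IsIccFace L H l h ∧ ∀ t ∈ Icc L H, a * t ≤ a * l ∧ (a * t = a * l ↔ t ∈ Icc l h) := by
  rcases lt_trichotomy a 0 with ha | rfl | ha
  · refine ⟨L, L, Or.inr (Or.inl ⟨rfl, rfl⟩), fun t ht =>
      ⟨mul_le_mul_of_nonpos_left ht.1 ha.le, ?_⟩⟩
    rw [mul_right_inj' ha.ne, Icc_self]
    rfl
  · exact ⟨L, H, IsIccFace.refl L H, fun t ht => by simp [ht]⟩
  · refine ⟨H, H, Or.inr (Or.inr ⟨rfl, rfl⟩), fun t ht =>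
      ⟨mul_le_mul_of_nonneg_left ht.2 ha.le, ?_⟩⟩
    rw [mul_right_inj' ha.ne', Icc_self]
    rfl

namespace Module.Basis

variable {V : Type*} [AddCommGroup V] [Module ℝ V] {ι : Type*} [Fintype ι] (B : Basis ι ℝ V)
  {L H l h l' h' : ι → ℝ}

def box (l h : ι → ℝ) : Set V := B.equivFun ⁻¹' Icc l h

theorem mem_box {x : V} : x ∈ B.box l h ↔ ∀ j, B.equivFun x j ∈ Icc (l j) (h j) := by
  rw [box, mem_preimage, ← pi_univ_Icc, mem_univ_pi]

theorem box_inter_box : B.box l h ∩ B.box l' h' = B.box (l ⊔ l') (h ⊓ h') := by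
  rw [box, box, box, ← preimage_inter, Icc_inter_Icc]

theorem box_nonempty_iff : (B.box l h).Nonempty ↔ l ≤ h :=
  B.equivFun.surjective.nonempty_preimage.trans nonempty_Icc

theorem apply_eq_sum_mul_equivFun (ℓ : V →ₗ[ℝ] ℝ) (x : V) :
    ℓ x = ∑ j, ℓ (B j) * B.equivFun x j := by
  conv_lhs => rw [← B.sum_equivFun x]
  simp only [map_sum, map_smul, smul_eq_mul, mul_comm]

theorem isPolyhedron_box (hlh : l ≤ h) : IsPolyhedron (B.box l h) := by
  classical
  refine ⟨B.box_nonempty_iff.2 hlh, Finset.univ.image (fun j => (B.coord j, h j)) ∪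
    Finset.univ.image (fun j => (-B.coord j, -l j)), ?_⟩
  ext x
  simp [mem_box, or_imp, forall_and, and_comm]

theorem setOf_eq_box_of_forall_mul_le {a c : ι → ℝ} (hLH : L ≤ H)
    (hf : ∀ j, IsIccFace (L j) (H j) (l j) (h j)) {ℓ : V →ₗ[ℝ] ℝ}
    (hℓ : ∀ x, ℓ x = ∑ j, a j * B.equivFun x j)
    (hac : ∀ j, ∀ t ∈ Icc (L j) (H j), a j * t ≤ c j ∧ (a j * t = c j ↔ t ∈ Icc (l j) (h j))) :
    (∀ x ∈ B.box L H, ℓ x ≤ ∑ j, c j) ∧ {x | x ∈ B.box L H ∧ ℓ x = ∑ j, c j} = B.box l h := by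
  have hle : ∀ x ∈ B.box L H, ∀ j ∈ Finset.univ, a j * B.equivFun x j ≤ c j :=
    fun x hx j _ => (hac j _ (B.mem_box.1 hx j)).1
  refine ⟨fun x hx => hℓ x ▸ Finset.sum_le_sum (hle x hx), Set.ext fun x => ?_⟩
  rw [mem_ofPred_eq, hℓ, B.mem_box, B.mem_box]
  constructor
  · rintro ⟨hx, hsum⟩ j
    exact (hac j _ (hx j)).2.1 ((Finset.sum_eq_sum_iff_of_le (hle x (B.mem_box.2 hx))).1 hsum j
      (Finset.mem_univ j))
  · intro hx
    have hxLH : ∀ j, B.equivFun x j ∈ Icc (L j) (H j) := fun j =>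
      have := (hf j).le (hLH j)
      ⟨this.1.trans (hx j).1, (hx j).2.trans this.2.2⟩
    exact ⟨hxLH, Finset.sum_congr rfl fun j _ => (hac j _ (hxLH j)).2.2 (hx j)⟩

theorem isFaceOf_box (hLH : L ≤ H) (hf : ∀ j, IsIccFace (L j) (H j) (l j) (h j)) :
    IsFaceOf (B.box l h) (B.box L H) := by
  choose a c hac using fun j => (hf j).exists_supporting
  obtain ⟨hle, heq⟩ := B.setOf_eq_box_of_forall_mul_le hLH hf
    (ℓ := ∑ j, a j • B.coord j) (fun x => by simp) hac
  exact Or.inr ⟨_, _, hle, heq.symm⟩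

theorem exists_eq_box_of_isFaceOf (hLH : L ≤ H) {F : Set V} (hF : IsFaceOf F (B.box L H))
    (hne : F.Nonempty) : ∃ l h, (∀ j, IsIccFace (L j) (H j) (l j) (h j)) ∧ F = B.box l h := by
  rcases hF with rfl | ⟨ℓ, c, hle, rfl⟩
  · exact ⟨L, H, fun j => .refl _ _, rfl⟩
  choose l h hf hmax using fun j => exists_isIccFace_maximizers (L j) (H j) (ℓ (B j))
  obtain ⟨hle', heq⟩ := B.setOf_eq_box_of_forall_mul_le hLH hf (B.apply_eq_sum_mul_equivFun ℓ) hmax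
  -- the maximum of `ℓ` on the box is attained at the vertex with coordinates `l`
  have hvertex : B.equivFun.symm l ∈ B.box L H := B.mem_box.2 fun j => by
    obtain ⟨hLl, hlh, hhH⟩ := (hf j).le (hLH j)
    rw [LinearEquiv.apply_symm_apply]
    exact ⟨hLl, hlh.trans hhH⟩
  have hc : c = ∑ j, ℓ (B j) * l j := by
    obtain ⟨x, hx, rfl⟩ := hne
    refine le_antisymm (hle' x hx) ?_
    have := hle _ hvertex
    rwa [B.apply_eq_sum_mul_equivFun ℓ, LinearEquiv.apply_symm_apply] at this
  exact ⟨l, h, hf, hc ▸ heq⟩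

theorem isPolyComplex_faces_box (hLH : L ≤ H) :
    IsPolyComplex {F | IsFaceOf F (B.box L H) ∧ F.Nonempty} := by
  refine ⟨?_, ?_, ?_⟩
  · rintro P ⟨hP, hne⟩
    obtain ⟨l, h, -, rfl⟩ := B.exists_eq_box_of_isFaceOf hLH hP hne
    exact B.isPolyhedron_box (B.box_nonempty_iff.1 hne)
  · rintro P ⟨hP, hne⟩ F hF hFne
    obtain ⟨l, h, hf, rfl⟩ := B.exists_eq_box_of_isFaceOf hLH hP hne
    obtain ⟨l', h', hf', rfl⟩ := B.exists_eq_box_of_isFaceOf (B.box_nonempty_iff.1 hne) hF hFne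
    exact ⟨B.isFaceOf_box hLH fun j => (hf j).trans (hf' j), hFne⟩
  · rintro P ⟨hP, hPne⟩ Q ⟨hQ, hQne⟩ hne
    obtain ⟨l, h, hf, rfl⟩ := B.exists_eq_box_of_isFaceOf hLH hP hPne
    obtain ⟨l', h', hf', rfl⟩ := B.exists_eq_box_of_isFaceOf hLH hQ hQne
    rw [B.box_inter_box] at hne ⊢
    have hle := B.box_nonempty_iff.1 hne
    refine ⟨B.isFaceOf_box (B.box_nonempty_iff.1 hPne) fun j =>
      (hf j).sup_inf (hLH j) (hf' j) (hle j), ?_⟩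
    rw [sup_comm l, inf_comm h] at hle ⊢
    exact B.isFaceOf_box (B.box_nonempty_iff.1 hQne) fun j =>
      (hf' j).sup_inf (hLH j) (hf j) (hle j)

end Module.Basis

section PolyComplex

variable {V : Type*} [AddCommGroup V] [Module ℝ V]

theorem IsFaceOf.subset {F P : Set V} (h : IsFaceOf F P) : F ⊆ P := by
  rcases h with rfl | ⟨ℓ, c, -, rfl⟩
  exacts [subset_rfl, fun _ hx => hx.1]

theorem IsPolyComplex.isFaceOf_inter_of_subset {𝒳 𝒴 : Set (Set V)} (h𝒳 : IsPolyComplex 𝒳)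
    (h𝒴 : IsPolyComplex 𝒴) {P Q Z : Set V} (hP : P ∈ 𝒳) (hQ : Q ∈ 𝒴) (hZ𝒳 : Z ∈ 𝒳)
    (hZ𝒴 : Z ∈ 𝒴) (hPQ : P ∩ Q ⊆ Z) (hne : (P ∩ Q).Nonempty) : IsFaceOf (P ∩ Q) P := by
  have hPZ : (P ∩ Z).Nonempty := hne.mono fun x hx => ⟨hx.1, hPQ hx⟩
  have hQZ : (Q ∩ Z).Nonempty := hne.mono fun x hx => ⟨hx.2, hPQ hx⟩
  obtain ⟨hPZP, hPZZ⟩ := h𝒳.2.2 P hP Z hZ𝒳 hPZ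
  have hPZ𝒳 : P ∩ Z ∈ 𝒳 := h𝒳.2.1 P hP _ hPZP hPZ
  have hPZ𝒴 : P ∩ Z ∈ 𝒴 := h𝒴.2.1 Z hZ𝒴 _ hPZZ hPZ
  have hQZ𝒴 : Q ∩ Z ∈ 𝒴 := h𝒴.2.1 Q hQ _ (h𝒴.2.2 Q hQ Z hZ𝒴 hQZ).1 hQZ
  have hcut : P ∩ Z ∩ (Q ∩ Z) = P ∩ Q := by
    ext x
    exact ⟨fun hx => ⟨hx.1.1, hx.2.1⟩, fun hx => ⟨⟨hx.1, hPQ hx⟩, hx.2, hPQ hx⟩⟩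
  have hPQ𝒳 : P ∩ Q ∈ 𝒳 := by
    refine h𝒳.2.1 _ hPZ𝒳 _ ?_ hne
    simpa only [hcut] using (h𝒴.2.2 _ hPZ𝒴 _ hQZ𝒴 (hcut ▸ hne)).1
  have hPPQ : P ∩ (P ∩ Q) = P ∩ Q := inter_eq_right.2 inter_subset_left
  simpa only [hPPQ] using (h𝒳.2.2 P hP _ hPQ𝒳 (by rwa [hPPQ])).1

theorem isPolyComplex_setOf_exists_isFaceOf {ι : Type*} {X : ι → Set V}
    (hX : ∀ σ, IsPolyComplex {F | IsFaceOf F (X σ) ∧ F.Nonempty})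
    (hZ : ∀ σ τ, ∃ Z, IsFaceOf Z (X σ) ∧ IsFaceOf Z (X τ) ∧ Z.Nonempty ∧ X σ ∩ X τ ⊆ Z) :
    IsPolyComplex {F | (∃ σ, IsFaceOf F (X σ)) ∧ F.Nonempty} := by
  refine ⟨?_, ?_, ?_⟩
  · rintro P ⟨⟨σ, hP⟩, hne⟩
    exact (hX σ).1 P ⟨hP, hne⟩
  · rintro P ⟨⟨σ, hP⟩, hne⟩ F hF hFne
    exact ⟨⟨σ, ((hX σ).2.1 P ⟨hP, hne⟩ F hF hFne).1⟩, hFne⟩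
  · rintro P ⟨⟨σ, hP⟩, hPne⟩ Q ⟨⟨τ, hQ⟩, hQne⟩ hne
    obtain ⟨Z, hZσ, hZτ, hZne, hsub⟩ := hZ σ τ
    have hPQ : P ∩ Q ⊆ Z := fun x hx => hsub ⟨hP.subset hx.1, hQ.subset hx.2⟩
    refine ⟨(hX σ).isFaceOf_inter_of_subset (hX τ) ⟨hP, hPne⟩ ⟨hQ, hQne⟩ ⟨hZσ, hZne⟩
      ⟨hZτ, hZne⟩ hPQ hne, ?_⟩
    rw [inter_comm] at hPQ hne ⊢
    exact (hX τ).isFaceOf_inter_of_subset (hX σ) ⟨hQ, hQne⟩ ⟨hP, hPne⟩ ⟨hZτ, hZne⟩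
      ⟨hZσ, hZne⟩ hPQ hne

theorem sUnion_setOf_exists_isFaceOf {ι : Type*} {X : ι → Set V} (hX : ∀ σ, (X σ).Nonempty) :
    ⋃₀ {F | (∃ σ, IsFaceOf F (X σ)) ∧ F.Nonempty} = ⋃ σ, X σ := by
  refine Subset.antisymm ?_ fun x hx => ?_
  · rintro x ⟨F, ⟨⟨σ, hF⟩, -⟩, hx⟩
    exact mem_iUnion.2 ⟨σ, hF.subset hx⟩
  · obtain ⟨σ, hσ⟩ := mem_iUnion.1 hx
    exact ⟨X σ, ⟨⟨σ, Or.inl rfl⟩, hX σ⟩, hσ⟩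

theorem IsPolyComplex.exists_inter_eq {ι : Type*} {X : ι → Set V}
    (hX : IsPolyComplex {C | ∃ σ, C = X σ}) {σ τ : ι} (hne : (X σ ∩ X τ).Nonempty) :
    ∃ ρ, X σ ∩ X τ = X ρ ∧ IsFaceOf (X ρ) (X σ) ∧ IsFaceOf (X ρ) (X τ) := by
  obtain ⟨hσ, hτ⟩ := hX.2.2 _ ⟨σ, rfl⟩ _ ⟨τ, rfl⟩ hne
  obtain ⟨ρ, hρ⟩ := hX.2.1 _ ⟨σ, rfl⟩ _ hσ hne
  exact ⟨ρ, hρ, hρ ▸ hσ, hρ ▸ hτ⟩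

end PolyComplex

section SimplicialCone

variable {V : Type*} [AddCommGroup V] [Module ℝ V] {ι κ : Type*} [Fintype ι] [Fintype κ]

def simplicialCone (w : κ → V) : Set V :=
  {x | ∃ t : κ → ℝ, (∀ i, 0 ≤ t i) ∧ x = ∑ i, t i • w i}

theorem zero_mem_simplicialCone (w : κ → V) : (0 : V) ∈ simplicialCone w :=
  ⟨0, fun _ => le_rfl, by simp⟩

theorem smul_mem_simplicialCone (w : κ → V) {c : ℝ} (hc : 0 ≤ c) (i : κ) :
    c • w i ∈ simplicialCone w := by
  classical
  refine ⟨Pi.single i c, fun j => ?_, by simp [Pi.single_apply]⟩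
  rcases eq_or_ne j i with rfl | hj
  · simpa using hc
  · simp [hj]

theorem zero_mem_parallelepiped (w : κ → V) : (0 : V) ∈ parallelepiped w :=
  (mem_parallelepiped_iff w 0).2 ⟨0, ⟨le_rfl, zero_le_one⟩, by simp⟩

theorem parallelepiped_subset_simplicialCone (w : κ → V) :
    parallelepiped w ⊆ simplicialCone w := fun x hx => by
  obtain ⟨t, ht, rfl⟩ := (mem_parallelepiped_iff w x).1 hx
  exact ⟨t, fun i => ht.1 i, rfl⟩

theorem IsFaceOf.exists_eq_ker {w : κ → V} {F : Set V} (hF : IsFaceOf F (simplicialCone w))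
    (h0 : (0 : V) ∈ F) :
    ∃ ℓ : V →ₗ[ℝ] ℝ, (∀ i, ℓ (w i) ≤ 0) ∧ F = {x | x ∈ simplicialCone w ∧ ℓ x = 0} := by
  rcases hF with rfl | ⟨ℓ, c, hle, rfl⟩
  · exact ⟨0, fun _ => le_rfl, by simp⟩
  obtain rfl : c = 0 := by simpa using h0.2.symm
  exact ⟨ℓ, fun i => hle _ (by simpa using smul_mem_simplicialCone w zero_le_one i), rfl⟩

theorem LinearIndependent.exists_nonneg_smul_eq_of_sum_eq {w : κ → V}
    (hw : LinearIndependent ℝ w) {y : ι → V} (hy : ∀ i, y i ∈ simplicialCone w) {m : κ}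
    (hsum : ∑ i, y i = w m) (i : ι) : ∃ c : ℝ, 0 ≤ c ∧ y i = c • w m := by
  classical
  choose T hT0 hT using hy
  have hcoef : ∀ m', ∑ i, T i m' = (Pi.single m 1 : κ → ℝ) m' := by
    refine Fintype.linearIndependent_iffₛ.1 hw _ _ ?_
    simp_rw [Finset.sum_smul]
    rw [Finset.sum_comm, ← Finset.sum_congr rfl fun i _ => hT i, hsum]
    simp [Pi.single_apply]
  refine ⟨T i m, hT0 i m, ?_⟩
  rw [hT i, Fintype.sum_eq_single m]
  intro m' hm'
  have hzero := (Finset.sum_eq_zero_iff_of_nonneg fun i _ => hT0 i m').1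
    (by rw [hcoef, Pi.single_eq_of_ne hm']) i (Finset.mem_univ i)
  rw [hzero, zero_smul]

theorem exists_pos_smul_eq_of_isFaceOf_simplicialCone {wr : κ → V} {ws : ι → V}
    (hwr : LinearIndependent ℝ wr) (hF : IsFaceOf (simplicialCone wr) (simplicialCone ws))
    (m : κ) : ∃ i, ∃ c : ℝ, 0 < c ∧ wr m = c • ws i := by
  obtain ⟨ℓ, hℓ, hF⟩ := hF.exists_eq_ker (zero_mem_simplicialCone wr)
  have hm : wr m ∈ simplicialCone wr := by simpa using smul_mem_simplicialCone wr zero_le_one m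
  rw [hF] at hm
  obtain ⟨⟨S, hS0, hSeq⟩, hℓm⟩ := hm
  have hterm : ∀ i, S i * ℓ (ws i) = 0 := fun i =>
    (Finset.sum_eq_zero_iff_of_nonpos fun i _ => mul_nonpos_of_nonneg_of_nonpos (hS0 i) (hℓ i)).1
      (by simpa [hSeq] using hℓm) i (Finset.mem_univ i)
  -- every summand of `wr m = ∑ S i • ws i` lies on the face, hence on the ray of `wr m`
  have hy : ∀ i, S i • ws i ∈ simplicialCone wr := fun i => by
    rw [hF]
    exact ⟨smul_mem_simplicialCone ws (hS0 i) i, by rw [map_smul, smul_eq_mul, hterm i]⟩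
  obtain ⟨i, -, hi⟩ := Finset.exists_ne_zero_of_sum_ne_zero (hSeq ▸ hwr.ne_zero m)
  obtain ⟨c, hc0, hc⟩ := hwr.exists_nonneg_smul_eq_of_sum_eq hy hSeq.symm i
  have hS : S i ≠ 0 := fun h => hi (by simp [h])
  have hc' : c ≠ 0 := fun h => hi (by simp [hc, h])
  refine ⟨i, S i / c, div_pos ((hS0 i).lt_of_ne' hS) (hc0.lt_of_ne' hc'), ?_⟩
  rw [div_eq_inv_mul, mul_smul, hc, smul_smul, inv_mul_cancel₀ hc', one_smul]

end SimplicialCone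

theorem extend_one_zero_mem_Icc {ι κ : Type*} (g : κ → ι) (j : ι) :
    Function.extend g (1 : κ → ℝ) 0 j ∈ Icc 0 1 := by
  classical
  rw [Function.extend_def]
  split_ifs <;> simp

namespace Module.Basis

variable {V : Type*} [AddCommGroup V] [Module ℝ V] {ι κ : Type*} [Fintype ι] [Fintype κ]
  (B : Basis ι ℝ V) {g : κ → ι}

theorem equivFun_sum_smul_comp (hg : Function.Injective g) (t : κ → ℝ) :
    B.equivFun (∑ m, t m • B (g m)) = Function.extend g t 0 := by
  classical
  ext j
  simp only [map_sum, map_smul, Finset.sum_apply, Pi.smul_apply, B.equivFun_self, smul_eq_mul,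
    mul_ite, mul_one, mul_zero]
  by_cases hj : ∃ m, g m = j
  · obtain ⟨m, rfl⟩ := hj
    rw [hg.extend_apply, Fintype.sum_eq_single m fun m' hm' => if_neg (hg.ne hm'), if_pos rfl]
  · rw [Function.extend_apply' _ _ _ hj, Finset.sum_eq_zero fun m _ => if_neg fun h => hj ⟨m, h⟩]
    rfl

theorem parallelepiped_comp_eq_box (hg : Function.Injective g) :
    _root_.parallelepiped (B ∘ g) = B.box 0 (Function.extend g 1 0) := by
  ext x
  rw [mem_parallelepiped_iff, B.mem_box]
  constructor
  · rintro ⟨t, ht, rfl⟩ j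
    rw [show ∑ m, t m • (B ∘ g) m = ∑ m, t m • B (g m) from rfl, B.equivFun_sum_smul_comp hg]
    by_cases hj : ∃ m, g m = j
    · obtain ⟨m, rfl⟩ := hj
      rw [hg.extend_apply, hg.extend_apply]
      exact ⟨ht.1 m, ht.2 m⟩
    · rw [Function.extend_apply' _ _ _ hj, Function.extend_apply' _ _ _ hj]
      exact ⟨le_rfl, le_rfl⟩
  · intro hx
    refine ⟨B.equivFun x ∘ g, ⟨fun m => ?_, fun m => ?_⟩, B.equivFun.injective ?_⟩
    · simpa [hg.extend_apply] using (hx (g m)).1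
    · simpa [hg.extend_apply] using (hx (g m)).2
    · rw [show ∑ m, (B.equivFun x ∘ g) m • (B ∘ g) m = ∑ m, (B.equivFun x ∘ g) m • B (g m)
        from rfl, B.equivFun_sum_smul_comp hg]
      ext j
      by_cases hj : ∃ m, g m = j
      · obtain ⟨m, rfl⟩ := hj
        rw [hg.extend_apply, Function.comp_apply]
      · have := hx j
        rw [Function.extend_apply' _ _ _ hj] at this
        rw [Function.extend_apply' _ _ _ hj]
        exact le_antisymm this.2 this.1

theorem parallelepiped_subset_box (hg : Function.Injective g) :
    _root_.parallelepiped (B ∘ g) ⊆ B.box 0 1 := by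
  rw [B.parallelepiped_comp_eq_box hg]
  exact fun x hx => B.mem_box.2 fun j =>
    ⟨(B.mem_box.1 hx j).1, (B.mem_box.1 hx j).2.trans (extend_one_zero_mem_Icc g j).2⟩

theorem isPolyComplex_faces_parallelepiped_comp (hg : Function.Injective g) :
    IsPolyComplex {F | IsFaceOf F (_root_.parallelepiped (B ∘ g)) ∧ F.Nonempty} := by
  rw [B.parallelepiped_comp_eq_box hg]
  exact B.isPolyComplex_faces_box fun j => (extend_one_zero_mem_Icc g j).1

theorem simplicialCone_inter_box_subset (hg : Function.Injective g) (l : ι → ℝ) :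
    simplicialCone (B ∘ g) ∩ B.box l 1 ⊆ _root_.parallelepiped (B ∘ g) := by
  rintro x ⟨⟨t, ht0, rfl⟩, hx⟩
  refine (mem_parallelepiped_iff _ _).2 ⟨t, ⟨ht0, fun m => ?_⟩, rfl⟩
  have := (B.mem_box.1 hx (g m)).2
  rwa [show ∑ m, t m • (B ∘ g) m = ∑ m, t m • B (g m) from rfl, B.equivFun_sum_smul_comp hg,
    hg.extend_apply] at this

theorem isFaceOf_parallelepiped_comp {κ' : Type*} [Fintype κ'] {f : κ' → ι}
    (hf : Function.Injective f) (hg : Function.Injective g) (hfg : range f ⊆ range g) :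
    IsFaceOf (_root_.parallelepiped (B ∘ f)) (_root_.parallelepiped (B ∘ g)) := by
  rw [B.parallelepiped_comp_eq_box hf, B.parallelepiped_comp_eq_box hg]
  refine B.isFaceOf_box (fun j => (extend_one_zero_mem_Icc g j).1) fun j => ?_
  by_cases hj : ∃ m, f m = j
  · obtain ⟨m, rfl⟩ := hj
    obtain ⟨m', hm'⟩ := hfg ⟨m, rfl⟩
    rw [hf.extend_apply, ← hm', hg.extend_apply]
    exact .refl _ _
  · rw [Function.extend_apply' _ _ _ hj]
    exact Or.inr (Or.inl ⟨rfl, rfl⟩)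

end Module.Basis

section Topology

open Filter Topology

variable {V : Type*} [AddCommGroup V] [Module ℝ V] [TopologicalSpace V] [IsTopologicalAddGroup V]
  [ContinuousSMul ℝ V] {ι : Type*} [Fintype ι]

theorem isCompact_parallelepiped {κ : Type*} [Fintype κ] (w : κ → V) :
    IsCompact (parallelepiped w) :=
  isCompact_Icc.image (by fun_prop)

theorem Module.Basis.box_mem_nhds_zero [T2Space V] (B : Basis ι ℝ V) {l h : ι → ℝ}
    (hl : ∀ j, l j < 0) (hh : ∀ j, 0 < h j) : B.box l h ∈ 𝓝 (0 : V) := by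
  refine B.equivFunL.continuous.continuousAt.preimage_mem_nhds ?_
  rw [map_zero, ← pi_univ_Icc]
  exact set_pi_mem_nhds finite_univ fun j _ => Icc_mem_nhds (hl j) (hh j)

theorem iUnion_parallelepiped_mem_nhds_zero [T2Space V] {ι' : Type*} [Finite ι'] {κ : ι' → Type*}
    [∀ σ, Fintype (κ σ)] (B : ι' → Basis ι ℝ V) {g : ∀ σ, κ σ → ι}
    (hg : ∀ σ, Function.Injective (g σ)) (hcover : ⋃ σ, simplicialCone (B σ ∘ g σ) = univ) :
    ⋃ σ, parallelepiped (B σ ∘ g σ) ∈ 𝓝 (0 : V) := by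
  refine mem_of_superset (iInter_mem.2 fun σ => (B σ).box_mem_nhds_zero (l := -1) (h := 1)
    (fun _ => neg_one_lt_zero) fun _ => one_pos) fun x hx => ?_
  obtain ⟨σ, hσ⟩ := mem_iUnion.1 (hcover.symm ▸ mem_univ x)
  exact mem_iUnion.2 ⟨σ, (B σ).simplicialCone_inter_box_subset (hg σ) _ ⟨hσ, mem_iInter.1 hx σ⟩⟩

end Topology

namespace IsBaseChange

variable {M V : Type*} [AddCommGroup M] [AddCommGroup V] [Module ℝ V] {ε : M →ₗ[ℤ] V}
  (ibc : IsBaseChange ℝ ε) {ι ι' κ κ' : Type*}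

theorem eq_one_of_basis_eq_smul (b : Basis ι ℤ M) (b' : Basis ι' ℤ M) {i : ι} {i' : ι'} {c : ℝ}
    (hc : 0 < c) (h : ibc.basis b' i' = c • ibc.basis b i) : c = 1 := by
  -- `c` and `c⁻¹` are coordinates of lattice vectors in lattice bases, hence integers
  have hz : c = b.repr (b' i') i := by
    have := congrArg (fun x => (ibc.basis b).repr x i) h
    rw [map_smul, Basis.repr_self, basis_apply, basis_repr_comp_apply] at this
    simpa using this.symm
  have hz' : c⁻¹ = b'.repr (b i) i' := by
    have h' : ibc.basis b i = c⁻¹ • ibc.basis b' i' := by rw [h, inv_smul_smul₀ hc.ne']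
    have := congrArg (fun x => (ibc.basis b').repr x i') h'
    rw [map_smul, Basis.repr_self, basis_apply, basis_repr_comp_apply] at this
    simpa using this.symm
  have hmul : b.repr (b' i') i * b'.repr (b i) i' = 1 := by
    exact_mod_cast (show (b.repr (b' i') i : ℝ) * b'.repr (b i) i' = 1 by
      rw [← hz, ← hz', mul_inv_cancel₀ hc.ne'])
  rw [hz, Int.eq_one_of_mul_eq_one_right (by exact_mod_cast hz ▸ hc.le) hmul, Int.cast_one]

variable [Fintype κ] [Fintype κ']

theorem exists_comp_eq_of_isFaceOf_simplicialCone (b : Basis ι ℤ M) (b' : Basis ι' ℤ M)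
    {g : κ → ι} {g' : κ' → ι'} (hg : Function.Injective g)
    (hF : IsFaceOf (simplicialCone (ibc.basis b ∘ g)) (simplicialCone (ibc.basis b' ∘ g'))) :
    ∃ f : κ → κ', ibc.basis b ∘ g = ibc.basis b' ∘ g' ∘ f := by
  choose f c hc hf using
    exists_pos_smul_eq_of_isFaceOf_simplicialCone ((ibc.basis b).linearIndependent.comp g hg) hF
  refine ⟨f, funext fun m => ?_⟩
  rw [hf m, ibc.eq_one_of_basis_eq_smul b' b (hc m) (hf m), one_smul]
  rfl

theorem isFaceOf_parallelepiped_of_isFaceOf_simplicialCone [Fintype ι] [Fintype ι']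
    (b : Basis ι ℤ M) (b' : Basis ι' ℤ M) {g : κ → ι} {g' : κ' → ι'} (hg : Function.Injective g)
    (hg' : Function.Injective g')
    (hF : IsFaceOf (simplicialCone (ibc.basis b ∘ g)) (simplicialCone (ibc.basis b' ∘ g'))) :
    IsFaceOf (parallelepiped (ibc.basis b ∘ g)) (parallelepiped (ibc.basis b' ∘ g')) ∧
      parallelepiped (ibc.basis b' ∘ g') ∩ simplicialCone (ibc.basis b ∘ g) ⊆
        parallelepiped (ibc.basis b ∘ g) := by
  obtain ⟨f, hf⟩ := ibc.exists_comp_eq_of_isFaceOf_simplicialCone b b' hg hF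
  have hinj : Function.Injective (g' ∘ f) :=
    Function.Injective.of_comp (f := ibc.basis b') (hf ▸ (ibc.basis b).injective.comp hg)
  rw [hf]
  exact ⟨(ibc.basis b').isFaceOf_parallelepiped_comp hinj hg' (range_comp_subset_range f g'),
    fun x hx => (ibc.basis b').simplicialCone_inter_box_subset hinj 0
      ⟨hx.2, (ibc.basis b').parallelepiped_subset_box hg' hx.1⟩⟩

end IsBaseChange

theorem IsBaseChange.isPolyComplex_faces_parallelepipeds {M V : Type*} [AddCommGroup M]
    [AddCommGroup V] [Module ℝ V] {ε : M →ₗ[ℤ] V} (ibc : IsBaseChange ℝ ε) {ι ι₀ : Type*}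
    [Fintype ι] {κ : ι₀ → Type*} [∀ σ, Fintype (κ σ)] (b : ι₀ → Basis ι ℤ M)
    {g : ∀ σ, κ σ → ι} (hg : ∀ σ, Function.Injective (g σ))
    (hfan : IsPolyComplex {C | ∃ σ, C = simplicialCone (ibc.basis (b σ) ∘ g σ)}) :
    IsPolyComplex
      {F | (∃ σ, IsFaceOf F (parallelepiped (ibc.basis (b σ) ∘ g σ))) ∧ F.Nonempty} := by
  refine isPolyComplex_setOf_exists_isFaceOf
    (fun σ => (ibc.basis (b σ)).isPolyComplex_faces_parallelepiped_comp (hg σ)) fun σ τ => ?_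
  obtain ⟨ρ, hρ, hρσ, hρτ⟩ :=
    hfan.exists_inter_eq ⟨0, zero_mem_simplicialCone _, zero_mem_simplicialCone _⟩
  obtain ⟨hσ, hσρ⟩ :=
    ibc.isFaceOf_parallelepiped_of_isFaceOf_simplicialCone (b ρ) (b σ) (hg ρ) (hg σ) hρσ
  obtain ⟨hτ, -⟩ :=
    ibc.isFaceOf_parallelepiped_of_isFaceOf_simplicialCone (b ρ) (b τ) (hg ρ) (hg τ) hρτ
  refine ⟨_, hσ, hτ, ⟨0, zero_mem_parallelepiped _⟩, fun x hx => hσρ ⟨hx.1, ?_⟩⟩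
  rw [← hρ]
  exact ⟨parallelepiped_subset_simplicialCone _ hx.1, parallelepiped_subset_simplicialCone _ hx.2⟩

/-- Let `Σ` be a complete unimodular fan in `ℝⁿ`, with cones
`cone σ` indexed by a finite type and generated by primitive generators `v σ 1, …,
v σ (k σ)` forming part of a lattice basis.  For each cone let `Cc σ` be the
parallelepiped `{∑ tᵢ • vᵢ : tᵢ ∈ [0,1]}`.  Then the union
`pStar = ⋃_σ Cc σ` is a compact neighbourhood of the origin that is star-shaped with
respect to `0`, and the collection of the `Cc σ` together with their faces forms a
polyhedral complex covering it. -/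
theorem pStar_of_complete_unimodular_fan {n : ℕ} {ι : Type*} [Fintype ι]
    (k : ι → ℕ) (v : ∀ σ : ι, Fin (k σ) → (Fin n → ℤ))
    (huni : ∀ σ, ∃ (b : Module.Basis (Fin n) ℤ (Fin n → ℤ)) (inj : Fin (k σ) ↪ Fin n),
      ∀ i, b (inj i) = v σ i)
    (cone : ι → Set (Fin n → ℝ))
    (hcone : ∀ σ, cone σ = {x | ∃ t : Fin (k σ) → ℝ, (∀ i, 0 ≤ t i) ∧
      x = ∑ i, t i • (fun j => (v σ i j : ℝ))})
    (hfan : IsFan {C | ∃ σ, C = cone σ})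
    (hcomplete : (⋃ σ, cone σ) = Set.univ)
    (Cc : ι → Set (Fin n → ℝ))
    (hC : ∀ σ, Cc σ = {x | ∃ t : Fin (k σ) → ℝ, (∀ i, 0 ≤ t i ∧ t i ≤ 1) ∧
      x = ∑ i, t i • (fun j => (v σ i j : ℝ))})
    (pStar : Set (Fin n → ℝ)) (hp : pStar = ⋃ σ, Cc σ) :
    IsCompact pStar ∧ pStar ∈ nhds (0 : Fin n → ℝ) ∧
      (∀ x ∈ pStar, ∀ t : ℝ, 0 ≤ t → t ≤ 1 → t • x ∈ pStar) ∧
      IsPolyComplex {F : Set (Fin n → ℝ) | (∃ σ, IsFaceOf F (Cc σ)) ∧ F.Nonempty} ∧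
      ⋃₀ {F : Set (Fin n → ℝ) | (∃ σ, IsFaceOf F (Cc σ)) ∧ F.Nonempty} = pStar := by
  subst hp
  choose b inj hbi using huni
  have ibc := (IsBaseChange.linearMap ℤ ℝ).finitePow (Fin n)
  have hw : ∀ σ, (fun i j => (v σ i j : ℝ)) = ibc.basis (b σ) ∘ inj σ := fun σ =>
    funext fun i => by rw [Function.comp_apply, IsBaseChange.basis_apply, hbi]; rfl
  obtain rfl : cone = fun σ => simplicialCone (ibc.basis (b σ) ∘ inj σ) :=
    funext fun σ => by rw [hcone, ← hw]; rfl
  obtain rfl : Cc = fun σ => parallelepiped (ibc.basis (b σ) ∘ inj σ) := funext fun σ => by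
    rw [hC, ← hw]
    ext x
    simp [mem_parallelepiped_iff, Pi.le_def, forall_and]
  have hinj : ∀ σ, Function.Injective (inj σ) := fun σ => (inj σ).injective
  refine ⟨isCompact_iUnion fun σ => isCompact_parallelepiped _,
    iUnion_parallelepiped_mem_nhds_zero _ hinj hcomplete, fun x hx t ht0 ht1 => ?_,
    ibc.isPolyComplex_faces_parallelepipeds b hinj hfan.1,
    sUnion_setOf_exists_isFaceOf fun σ => ⟨0, zero_mem_parallelepiped _⟩⟩
  obtain ⟨σ, hσ⟩ := mem_iUnion.1 hx
  exact mem_iUnion.2 ⟨σ, (convex_parallelepiped _).smul_mem_of_zero_mem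
    (zero_mem_parallelepiped _) hσ ⟨ht0, ht1⟩⟩
end
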